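/- arXiv:1808.01450 — 4 statements merged into one kernel-verified Lean document; each statement's English description precedes it below -/
import Mathlib

section
/- If a tower {G_n}_{n∈ω} of topological groups satisfies the PTA condition, then it satisfies the Group Condition (GC). -/
open Topology Filter Set Pointwise

/-- The finite product `U k · U (k+1) ⋯ U (k+j)` of a sequence of subsets of a group. -/
def bsProd {G : Type*} [Group G] (U : ℕ → Set G) (k : ℕ) : ℕ → Set G
  | 0 => U k
  | j + 1 => bsProd U k j * U (k + (j + 1))

/-- `U⁺[k] = ⋃_{n ≥ k} U k · U (k+1) ⋯ U n`. -/
def bsPlus {G : Type*} [Group G] (U : ℕ → Set G) (k : ℕ) : Set G :=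
  ⋃ j, bsProd U k j

/-- The Bamboo-Shoot set `U[k] = (U⁺[k])⁻¹ · U⁺[k]`. -/
def bsU {G : Type*} [Group G] (U : ℕ → Set G) (k : ℕ) : Set G :=
  (bsPlus U k)⁻¹ * bsPlus U k

/-- A tower of topological groups inside an ambient (abstract) group `G`:
an increasing sequence of subgroups covering `G`, each carrying its own group topology,
such that all inclusions `G_n → G_{n+1}` are continuous. -/
structure GroupTower (G : Type*) [Group G] where
  H : ℕ → Subgroup G
  τ : ∀ n, TopologicalSpace (H n)
  topGroup : ∀ n, @IsTopologicalGroup (H n) (τ n) _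
  mono : ∀ n, H n ≤ H (n + 1)
  union : ∀ g : G, ∃ n, g ∈ H n
  incl_cont : ∀ n, Continuous[τ n, τ (n + 1)] (Subgroup.inclusion (mono n))

namespace GroupTower

variable {G : Type*} [Group G]

/-- The tower is closed: each `G_n` carries the subspace topology from `G_{n+1}`
and is closed in `G_{n+1}`. -/
def IsClosedTower (T : GroupTower G) : Prop :=
  ∀ n, T.τ n = (T.τ (n + 1)).induced (Subgroup.inclusion (T.mono n)) ∧
    IsClosed[T.τ (n + 1)] (Set.range (Subgroup.inclusion (T.mono n)))

/-- `U` (viewed as a subset of the ambient group) is an open symmetric neighborhood of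
the identity in `G_n`. -/
def NsMem (T : GroupTower G) (n : ℕ) (U : Set G) : Prop :=
  U ⊆ (T.H n : Set G) ∧ IsOpen[T.τ n] (((↑) : T.H n → G) ⁻¹' U) ∧ (1 : G) ∈ U ∧ U⁻¹ = U

/-- The Group Condition (GC). -/
def GC (T : GroupTower G) : Prop :=
  ∀ U : ℕ → Set G, (∀ n, T.NsMem n (U n)) → ∀ k : ℕ,
    ∃ V : ℕ → Set G, (∀ n, T.NsMem n (V n)) ∧ bsU V k ⊆ bsPlus U k

/-- `τBS` is the Bamboo-Shoot topology of the tower: at every point `g` the sets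
`g • U[k]` form a neighborhood base. -/
def IsBambooShoot (T : GroupTower G) (τBS : TopologicalSpace G) : Prop :=
  ∀ g : G, (@nhds G τBS g).HasBasis
    (fun p : (ℕ → Set G) × ℕ => ∀ n, T.NsMem n (p.1 n))
    (fun p => g • bsU p.1 p.2)

/-- `τind` is the inductive limit topology of the tower in the category of topological
spaces: a set is open iff its trace on every `G_n` is open. -/
def IsIndTop (T : GroupTower G) (τind : TopologicalSpace G) : Prop :=
  ∀ A : Set G, IsOpen[τind] A ↔ ∀ n, IsOpen[T.τ n] (((↑) : T.H n → G) ⁻¹' A)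

/-- `t` is a group topology on `G` making all the inclusions `G_n → G` continuous. -/
def IsCompatGroupTopology (T : GroupTower G) (t : TopologicalSpace G) : Prop :=
  @IsTopologicalGroup G t _ ∧ ∀ n, Continuous[T.τ n, t] ((↑) : T.H n → G)

/-- `t` coincides with `τ_gr`, i.e. `(G, t) = glim G_n` : `t` is a group topology making
all inclusions continuous, and it is the finest such topology (every open set of any
such topology is `t`-open). -/
def IsGLim (T : GroupTower G) (t : TopologicalSpace G) : Prop :=
  T.IsCompatGroupTopology t ∧
    ∀ t' : TopologicalSpace G, T.IsCompatGroupTopology t' →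
      ∀ A : Set G, IsOpen[t'] A → IsOpen[t] A

end GroupTower

/-- A topological space is Ascoli if every compact subset of `C_k(X, ℝ)` is
equicontinuous. -/
def IsAscoliSpace (X : Type*) [TopologicalSpace X] : Prop :=
  ∀ K : Set C(X, ℝ), IsCompact K → Equicontinuous fun f : K => (f.1 : X → ℝ)

/-- A family of sets is a k-network. -/
def IsKNetwork {X : Type*} [TopologicalSpace X] (N : Set (Set X)) : Prop :=
  ∀ K U : Set X, IsCompact K → IsOpen U → K ⊆ U →
    ∃ F : Set (Set X), F ⊆ N ∧ F.Finite ∧ K ⊆ ⋃₀ F ∧ ⋃₀ F ⊆ U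

/-- A family of sets is locally finite. -/
def IsLocallyFiniteFamily {X : Type*} [TopologicalSpace X] (N : Set (Set X)) : Prop :=
  ∀ x : X, ∃ V ∈ 𝓝 x, {s ∈ N | (s ∩ V).Nonempty}.Finite

/-- An ℵ-space: a regular space with a σ-locally finite k-network. -/
def IsAlephSpace (X : Type*) [TopologicalSpace X] : Prop :=
  RegularSpace X ∧ ∃ N : ℕ → Set (Set X),
    (∀ n, IsLocallyFiniteFamily (N n)) ∧ IsKNetwork (⋃ n, N n)

/-- An ℵ₀-space: a regular space with a countable k-network. -/
def IsAleph0Space (X : Type*) [TopologicalSpace X] : Prop :=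
  RegularSpace X ∧ ∃ N : Set (Set X), N.Countable ∧ IsKNetwork N

/-- A k_ω-space. -/
def IsKOmegaSpace (X : Type*) [TopologicalSpace X] : Prop :=
  ∃ K : ℕ → Set X, (∀ n, IsCompact (K n)) ∧ (∀ n, K n ⊆ K (n + 1)) ∧
    (⋃ n, K n) = Set.univ ∧
    ∀ A : Set X, IsClosed A ↔ ∀ n, IsClosed (((↑) : K n → X) ⁻¹' A)

/-- An MK_ω-space: a k_ω-space witnessed by metrizable compact sets. -/
def IsMKOmegaSpace (X : Type*) [TopologicalSpace X] : Prop :=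
  ∃ K : ℕ → Set X, (∀ n, IsCompact (K n)) ∧
    (∀ n, TopologicalSpace.MetrizableSpace (K n)) ∧ (∀ n, K n ⊆ K (n + 1)) ∧
    (⋃ n, K n) = Set.univ ∧
    ∀ A : Set X, IsClosed A ↔ ∀ n, IsClosed (((↑) : K n → X) ⁻¹' A)

/-- The PTA (Passing Through Assumption) condition of Tatsuuma–Shimomura–Hirai: each
`G_n` has a neighborhood base `B` at the identity consisting of open symmetric sets `U`
such that for every `m ≥ n` and every neighborhood `W` of the identity in `G_m` there is
a neighborhood `V` of the identity in `G_m` with `V·U ⊆ U·W`. -/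
def GroupTower.PTA {G : Type*} [Group G] (T : GroupTower G) : Prop :=
  ∀ n : ℕ, ∃ B : Set (Set G),
    (∀ U ∈ B, T.NsMem n U) ∧
    (∀ s : Set (T.H n), s ∈ @nhds _ (T.τ n) 1 → ∃ U ∈ B, ((↑) : T.H n → G) ⁻¹' U ⊆ s) ∧
    (∀ U ∈ B, ∀ m : ℕ, n ≤ m → ∀ W : Set G,
      W ⊆ (T.H m : Set G) → ((↑) : T.H m → G) ⁻¹' W ∈ @nhds _ (T.τ m) 1 →
      ∃ V : Set G, V ⊆ (T.H m : Set G) ∧ ((↑) : T.H m → G) ⁻¹' V ∈ @nhds _ (T.τ m) 1 ∧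
        V * U ⊆ U * W)

section Aux

namespace GroupTower

variable {G : Type*} [Group G] {T : GroupTower G}

/-- `V` is a (not necessarily open) neighborhood of the identity in `G_m`. -/
def Nbhd (T : GroupTower G) (m : ℕ) (V : Set G) : Prop :=
  V ⊆ (T.H m : Set G) ∧ ((↑) : T.H m → G) ⁻¹' V ∈ @nhds _ (T.τ m) 1

lemma NsMem.nbhd {n : ℕ} {U : Set G} (h : T.NsMem n U) : T.Nbhd n U := by
  refine ⟨h.1, ?_⟩
  letI := T.τ n
  exact h.2.1.mem_nhds (by simpa using h.2.2.1)

lemma image_nsMem {n : ℕ} {S : Set (T.H n)} (hS : IsOpen[T.τ n] S)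
    (h1 : (1 : T.H n) ∈ S) (hsym : S⁻¹ = S) :
    T.NsMem n (((↑) : T.H n → G) '' S) := by
  refine ⟨?_, ?_, ?_, ?_⟩
  · rintro x ⟨a, _, rfl⟩; exact a.2
  · rw [Set.preimage_image_eq _ Subtype.coe_injective]; exact hS
  · exact ⟨1, h1, rfl⟩
  · ext x
    simp only [Set.mem_inv, Set.mem_image]
    constructor
    · rintro ⟨a, ha, hax⟩
      have ha' : a⁻¹ ∈ S := by rw [← hsym]; simpa using ha
      refine ⟨a⁻¹, ha', ?_⟩
      have : (a : G) = x⁻¹ := hax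
      simp [this]
    · rintro ⟨a, ha, rfl⟩
      have ha' : a⁻¹ ∈ S := by rw [← hsym]; simpa using ha
      exact ⟨a⁻¹, ha', by simp⟩

lemma nbhd_shrink {m : ℕ} {s : Set G} (hs : T.Nbhd m s) :
    ∃ V : Set G, T.NsMem m V ∧ V ⊆ s := by
  letI := T.τ m
  haveI := T.topGroup m
  obtain ⟨t, hts, hto, ht1⟩ := mem_nhds_iff.mp hs.2
  have hsym : (t ∩ t⁻¹)⁻¹ = t ∩ t⁻¹ := by
    rw [Set.inter_inv, inv_inv, Set.inter_comm]
  refine ⟨(↑) '' (t ∩ t⁻¹),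
    image_nsMem (hto.inter hto.inv) ⟨ht1, by simpa using ht1⟩ hsym, ?_⟩
  rintro x ⟨a, ⟨ha, _⟩, rfl⟩
  exact hts ha

lemma nbhd_sqrt {m : ℕ} {U : Set G} (hU : T.Nbhd m U) :
    ∃ O : Set G, T.NsMem m O ∧ O * O ⊆ U := by
  letI := T.τ m
  haveI := T.topGroup m
  obtain ⟨t, hto, ht1, htt⟩ := exists_open_nhds_one_mul_subset hU.2
  have hsym : (t ∩ t⁻¹)⁻¹ = t ∩ t⁻¹ := by
    rw [Set.inter_inv, inv_inv, Set.inter_comm]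
  refine ⟨(↑) '' (t ∩ t⁻¹),
    image_nsMem (hto.inter hto.inv) ⟨ht1, by simpa using ht1⟩ hsym, ?_⟩
  rintro x ⟨y, ⟨a, ⟨ha, _⟩, rfl⟩, z, ⟨b, ⟨hb, _⟩, rfl⟩, rfl⟩
  have : a * b ∈ ((↑) : T.H m → G) ⁻¹' U := htt (Set.mul_mem_mul ha hb)
  simpa using this

/-- The set `U` can be passed through by neighborhoods from higher levels. -/
def Pass (T : GroupTower G) (n : ℕ) (U : Set G) : Prop :=
  ∀ m, n ≤ m → ∀ W : Set G, T.Nbhd m W → ∃ V : Set G, T.Nbhd m V ∧ V * U ⊆ U * W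

lemma pta_shrink (hPTA : T.PTA) {n : ℕ} {U : Set G} (hU : T.NsMem n U) :
    ∃ U' : Set G, T.NsMem n U' ∧ U' ⊆ U ∧ T.Pass n U' := by
  obtain ⟨B, hB1, hB2, hB3⟩ := hPTA n
  obtain ⟨U', hU'B, hsub⟩ := hB2 _ (NsMem.nbhd hU).2
  refine ⟨U', hB1 _ hU'B, ?_, ?_⟩
  · intro x hx
    have hxH : x ∈ T.H n := (hB1 _ hU'B).1 hx
    have hx' : (⟨x, hxH⟩ : T.H n) ∈ ((↑) : T.H n → G) ⁻¹' U' := hx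
    exact hsub hx'
  · intro m hm W hW
    obtain ⟨V, h1, h2, h3⟩ := hB3 _ hU'B m hm W hW.1 hW.2
    exact ⟨V, ⟨h1, h2⟩, h3⟩

lemma pass_prod {U' : ℕ → Set G} {k : ℕ} (hp : ∀ n, T.Pass n (U' n)) :
    ∀ j m, k + j ≤ m → ∀ W : Set G, T.Nbhd m W →
      ∃ V : Set G, T.Nbhd m V ∧ V * bsProd U' k j ⊆ bsProd U' k j * W := by
  intro j
  induction j with
  | zero =>
    intro m hm W hW
    exact hp k m (by omega) W hW
  | succ j ih =>
    intro m hm W hW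
    obtain ⟨Y, hY, hYs⟩ := hp (k + (j + 1)) m (by omega) W hW
    obtain ⟨V, hV, hVs⟩ := ih m (by omega) Y hY
    refine ⟨V, hV, ?_⟩
    show V * (bsProd U' k j * U' (k + (j + 1))) ⊆ bsProd U' k j * U' (k + (j + 1)) * W
    calc V * (bsProd U' k j * U' (k + (j + 1)))
        = (V * bsProd U' k j) * U' (k + (j + 1)) := (mul_assoc _ _ _).symm
      _ ⊆ (bsProd U' k j * Y) * U' (k + (j + 1)) := Set.mul_subset_mul_right hVs
      _ = bsProd U' k j * (Y * U' (k + (j + 1))) := mul_assoc _ _ _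
      _ ⊆ bsProd U' k j * (U' (k + (j + 1)) * W) := Set.mul_subset_mul_left hYs
      _ = bsProd U' k j * U' (k + (j + 1)) * W := (mul_assoc _ _ _).symm

end GroupTower

lemma bsProd_mono_set {G : Type*} [Group G] {U V : ℕ → Set G} (h : ∀ n, U n ⊆ V n)
    (k : ℕ) : ∀ j, bsProd U k j ⊆ bsProd V k j := by
  intro j
  induction j with
  | zero => exact h k
  | succ j ih => exact Set.mul_subset_mul ih (h _)

lemma bsProd_mono_idx {G : Type*} [Group G] {U : ℕ → Set G} (h : ∀ n, (1 : G) ∈ U n)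
    (k : ℕ) : ∀ {i j : ℕ}, i ≤ j → bsProd U k i ⊆ bsProd U k j := by
  intro i j hij
  induction j with
  | zero => rw [Nat.le_zero.mp hij]
  | succ j ih =>
    rcases Nat.le_succ_iff.mp hij with hij' | rfl
    · rcases Nat.lt_succ_iff.mp (Nat.lt_succ_of_le hij') with h'
      exact (ih h').trans (Set.subset_mul_left _ (h _))
    · exact subset_rfl


open GroupTower in
/-- PTA implies the Group Condition (GC). -/
theorem statement_8 {G : Type*} [Group G] (T : GroupTower G) (hPTA : T.PTA) : T.GC := by
  intro U hU k
  choose U' hU'ns hU'sub hU'pass using fun n => pta_shrink hPTA (hU n)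
  obtain ⟨Ok, hOk, hOkOk⟩ := nbhd_sqrt (NsMem.nbhd (hU'ns k))
  have hstep : ∀ j, ∃ Vj : Set G, T.NsMem (k + j + 1) Vj ∧
      Vj * bsProd U' k j * Vj ⊆ bsProd U' k (j + 1) := by
    intro j
    obtain ⟨O, hO, hOO⟩ := nbhd_sqrt (NsMem.nbhd (hU'ns (k + j + 1)))
    obtain ⟨X, hX, hXP⟩ := pass_prod hU'pass j (k + j + 1) (Nat.le_succ _) O (NsMem.nbhd hO)
    have hXO : T.Nbhd (k + j + 1) (X ∩ O) :=
      ⟨Set.inter_subset_left.trans hX.1, by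
        rw [Set.preimage_inter]; exact Filter.inter_mem hX.2 (NsMem.nbhd hO).2⟩
    obtain ⟨Vj, hVjns, hVjsub⟩ := nbhd_shrink hXO
    refine ⟨Vj, hVjns, ?_⟩
    have h1 : Vj ⊆ X := fun x hx => (hVjsub hx).1
    have h2 : Vj ⊆ O := fun x hx => (hVjsub hx).2
    calc Vj * bsProd U' k j * Vj
        ⊆ X * bsProd U' k j * O := Set.mul_subset_mul (Set.mul_subset_mul_right h1) h2
      _ ⊆ (bsProd U' k j * O) * O := Set.mul_subset_mul_right hXP
      _ = bsProd U' k j * (O * O) := mul_assoc _ _ _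
      _ ⊆ bsProd U' k j * U' (k + j + 1) := Set.mul_subset_mul_left hOO
      _ = bsProd U' k (j + 1) := rfl
  choose f hfns hfsub using hstep
  set V : ℕ → Set G := fun n => if n < k then U' n else if n = k then Ok else f (n - k - 1)
    with hV
  have hVk : V k = Ok := by simp [hV]
  have hVj : ∀ j, V (k + j + 1) = f j := by
    intro j
    have h1 : ¬ (k + j + 1 < k) := by omega
    have h2 : k + j + 1 ≠ k := by omega
    have h3 : k + j + 1 - k - 1 = j := by omega
    simp [hV, h1, h2, h3]
  have hVns : ∀ n, T.NsMem n (V n) := by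
    intro n
    rcases lt_trichotomy n k with h | rfl | h
    · rw [show V n = U' n by simp [hV, h]]; exact hU'ns n
    · rw [hVk]; exact hOk
    · have hn : n = k + (n - k - 1) + 1 := by omega
      rw [hn, hVj]; exact hfns _
  have hkey : ∀ j, (bsProd V k j)⁻¹ * bsProd V k j ⊆ bsProd U' k j := by
    intro j
    induction j with
    | zero =>
      show (V k)⁻¹ * V k ⊆ U' k
      rw [(hVns k).2.2.2, hVk]
      exact hOkOk
    | succ j ih =>
      show (bsProd V k j * V (k + (j + 1)))⁻¹ * (bsProd V k j * V (k + (j + 1)))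
        ⊆ bsProd U' k (j + 1)
      have hsymV : (V (k + (j + 1)))⁻¹ = V (k + (j + 1)) := (hVns _).2.2.2
      rw [mul_inv_rev, hsymV]
      calc V (k + (j + 1)) * (bsProd V k j)⁻¹ * (bsProd V k j * V (k + (j + 1)))
          = V (k + (j + 1)) * ((bsProd V k j)⁻¹ * bsProd V k j) * V (k + (j + 1)) := by
            rw [mul_assoc, mul_assoc, mul_assoc]
        _ ⊆ V (k + (j + 1)) * bsProd U' k j * V (k + (j + 1)) :=
            Set.mul_subset_mul (Set.mul_subset_mul_left ih) subset_rfl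
        _ ⊆ bsProd U' k (j + 1) := by
            rw [show k + (j + 1) = k + j + 1 from rfl, hVj]; exact hfsub j
  refine ⟨V, hVns, ?_⟩
  intro z hz
  simp only [bsU, bsPlus, Set.mem_mul, Set.mem_inv, Set.mem_iUnion] at hz
  obtain ⟨a, ⟨i, hai⟩, b, ⟨j, hbj⟩, rfl⟩ := hz
  have h1V : ∀ n, (1 : G) ∈ V n := fun n => (hVns n).2.2.1
  have haN : a⁻¹ ∈ bsProd V k (max i j) := bsProd_mono_idx h1V k (le_max_left i j) hai
  have hbN : b ∈ bsProd V k (max i j) := bsProd_mono_idx h1V k (le_max_right i j) hbj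
  have hab : a * b ∈ (bsProd V k (max i j))⁻¹ * bsProd V k (max i j) :=
    Set.mul_mem_mul (Set.mem_inv.mpr haN) hbN
  exact Set.mem_iUnion.mpr ⟨max i j, bsProd_mono_set hU'sub k (max i j) (hkey (max i j) hab)⟩
end Aux
end

section
/- If a tower {G_n}_{n∈ω} of topological groups is balanced, then it satisfies the Group Condition (GC). -/
open Topology Filter Set Pointwise

/-- The tower is balanced: each triple `(G_n, G_{n+1}, G_{n+2})` is balanced, i.e. for
all neighborhoods `V ⊆ G_{n+1}` and `U ⊆ G_{n+2}` of the identity, the product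
`V · √U^{G_n}`, where `√U^{G_n} = {g ∈ G_{n+2} : h g h⁻¹ ∈ U for all h ∈ G_n}`, is a
neighborhood of the identity in `G_{n+2}`. -/
def GroupTower.IsBalanced {G : Type*} [Group G] (T : GroupTower G) : Prop :=
  ∀ n : ℕ, ∀ V U : Set G,
    V ⊆ (T.H (n + 1) : Set G) →
    ((↑) : T.H (n + 1) → G) ⁻¹' V ∈ @nhds _ (T.τ (n + 1)) 1 →
    U ⊆ (T.H (n + 2) : Set G) →
    ((↑) : T.H (n + 2) → G) ⁻¹' U ∈ @nhds _ (T.τ (n + 2)) 1 →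
    ((↑) : T.H (n + 2) → G) ⁻¹'
        (V * {g ∈ (T.H (n + 2) : Set G) | ∀ h ∈ (T.H n : Set G), h * g * h⁻¹ ∈ U}) ∈
      @nhds _ (T.τ (n + 2)) 1

section Aux

variable {G : Type*} [Group G]

lemma bsProd_zero (A : ℕ → Set G) (a : ℕ) : bsProd A a 0 = A a := rfl

lemma bsProd_succ (A : ℕ → Set G) (a j : ℕ) :
    bsProd A a (j + 1) = bsProd A a j * A (a + (j + 1)) := rfl

lemma bsProd_succ_left (A : ℕ → Set G) (a j : ℕ) :
    bsProd A a (j + 1) = A a * bsProd A (a + 1) j := by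
  induction j with
  | zero => rfl
  | succ j ih =>
    rw [bsProd_succ, ih, bsProd_succ, mul_assoc, show a + (j + 1 + 1) = a + 1 + (j + 1) by omega]

lemma bsProd_mono {A B : ℕ → Set G} (a j : ℕ) (h : ∀ i, a ≤ i → A i ⊆ B i) :
    bsProd A a j ⊆ bsProd B a j := by
  induction j with
  | zero => exact h a le_rfl
  | succ j ih => exact Set.mul_subset_mul ih (h _ (by omega))

lemma bsProd_shift_mono {A B : ℕ → Set G} (a j : ℕ) (h : ∀ i, a ≤ i → A i ⊆ B (i + 1)) :
    bsProd A a j ⊆ bsProd B (a + 1) j := by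
  induction j with
  | zero => exact h a le_rfl
  | succ j ih =>
    rw [bsProd_succ, bsProd_succ, show a + 1 + (j + 1) = a + (j + 1) + 1 by omega]
    exact Set.mul_subset_mul ih (h _ (by omega))

namespace GroupTower

variable (T : GroupTower G)

/-- The set of elements of `G_i` whose conjugates under `G_{i-2}` all stay in `C i`. -/
def sigSet (C : ℕ → Set G) (i : ℕ) : Set G :=
  {g | g ∈ (T.H i : Set G) ∧ ∀ h, h ∈ (T.H (i - 2) : Set G) → h * g * h⁻¹ ∈ C i}

lemma Hmono {r s : ℕ} (h : r ≤ s) : (T.H r : Set G) ⊆ (T.H s : Set G) := by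
  have : T.H r ≤ T.H s := monotone_nat_of_le_succ T.mono h
  exact fun g hg => this hg

lemma nsmem_nhds {n : ℕ} {S : Set G} (h : T.NsMem n S) :
    (((↑) : T.H n → G) ⁻¹' S) ∈ @nhds _ (T.τ n) 1 := by
  letI := T.τ n
  exact h.2.1.mem_nhds (by simp [Set.mem_preimage, h.2.2.1])

lemma trace_nhds (n : ℕ) (S : Set G)
    (h : (((↑) : T.H (n + 1) → G) ⁻¹' S) ∈ @nhds _ (T.τ (n + 1)) 1) :
    (((↑) : T.H n → G) ⁻¹' S) ∈ @nhds _ (T.τ n) 1 := by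
  letI := T.τ n
  letI := T.τ (n + 1)
  have hc : Continuous[T.τ n, T.τ (n + 1)] (Subgroup.inclusion (T.mono n)) := T.incl_cont n
  have h1 : (Subgroup.inclusion (T.mono n)) 1 = 1 := map_one _
  have hpre : (((↑) : T.H n → G) ⁻¹' S)
      = (Subgroup.inclusion (T.mono n)) ⁻¹' ((((↑) : T.H (n + 1) → G)) ⁻¹' S) := by
    ext x; simp [Subgroup.coe_inclusion]
  rw [hpre]
  have ht := hc.tendsto (1 : T.H n)
  rw [h1] at ht
  exact ht h

lemma exists_ns (n : ℕ) (S : Set G)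
    (hS : (((↑) : T.H n → G) ⁻¹' S) ∈ @nhds _ (T.τ n) 1) :
    ∃ W : Set G, T.NsMem n W ∧ W * W * W ⊆ S := by
  letI := T.τ n
  haveI := T.topGroup n
  obtain ⟨V1, hV1o, hV11, hV1m⟩ := exists_open_nhds_one_mul_subset hS
  obtain ⟨V2, hV2o, hV21, hV2m⟩ := exists_open_nhds_one_mul_subset (hV1o.mem_nhds hV11)
  set W0 : Set (T.H n) := V2 ∩ V2⁻¹ with hW0
  have hW0o : IsOpen W0 := hV2o.inter hV2o.inv
  have hW01 : (1 : T.H n) ∈ W0 := ⟨hV21, by simpa using hV21⟩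
  have hW0s : W0⁻¹ = W0 := by
    rw [hW0, Set.inter_inv, inv_inv, Set.inter_comm]
  have hW0sub : W0 ⊆ V2 := Set.inter_subset_left
  have h3 : ∀ a b c : T.H n, a ∈ W0 → b ∈ W0 → c ∈ W0 →
      a * b * c ∈ ((↑) : T.H n → G) ⁻¹' S := by
    intro a b c ha hb hc
    have hab : a * b ∈ V1 := hV2m (Set.mul_mem_mul (hW0sub ha) (hW0sub hb))
    have hc1 : c ∈ V1 := by
      have := hV2m (Set.mul_mem_mul (hW0sub hc) hV21)
      rwa [mul_one] at this
    exact hV1m (Set.mul_mem_mul hab hc1)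
  refine ⟨(↑) '' W0, ⟨?_, ?_, ?_, ?_⟩, ?_⟩
  · rintro g ⟨w, _, rfl⟩; exact w.2
  · rw [Set.preimage_image_eq W0 Subtype.coe_injective]; exact hW0o
  · exact ⟨1, hW01, rfl⟩
  · ext g
    constructor
    · rintro hg
      rw [Set.mem_inv] at hg
      obtain ⟨w, hw, hwe⟩ := hg
      refine ⟨w⁻¹, ?_, ?_⟩
      · rw [← hW0s]; exact Set.inv_mem_inv.mpr hw
      · push_cast [hwe]; simp
    · rintro ⟨w, hw, rfl⟩
      rw [Set.mem_inv]
      refine ⟨w⁻¹, ?_, by push_cast; simp⟩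
      rw [← hW0s]; exact Set.inv_mem_inv.mpr hw
  · rintro g ⟨pq, ⟨p, ⟨x, hx, rfl⟩, q, ⟨y, hy, rfl⟩, rfl⟩, r, ⟨z, hz, rfl⟩, rfl⟩
    have := h3 x y z hx hy hz
    simpa using this

lemma sig_subset (C : ℕ → Set G) (i : ℕ) : T.sigSet C i ⊆ C i := by
  intro g hg
  have := hg.2 1 (SetLike.mem_coe.mpr (one_mem _))
  simpa using this

lemma sig_conj (C : ℕ → Set G) {i r : ℕ} (hri : r + 2 ≤ i) {g x : G}
    (hg : g ∈ T.sigSet C i) (hx : x ∈ (T.H r : Set G)) : x * g * x⁻¹ ∈ T.sigSet C i := by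
  have hx2 : x ∈ (T.H (i - 2) : Set G) := T.Hmono (by omega) hx
  have hxi : x ∈ T.H i := T.Hmono (by omega) hx
  have hgi : g ∈ T.H i := hg.1
  constructor
  · exact mul_mem (mul_mem hxi hgi) (inv_mem hxi)
  · intro h hh
    have hmem := hg.2 (h * x) (mul_mem hh hx2)
    have e : h * (x * g * x⁻¹) * h⁻¹ = (h * x) * g * (h * x)⁻¹ := by group
    rw [e]; exact hmem

lemma mig (C : ℕ → Set G) {a r : ℕ} (hra : r + 2 ≤ a) {x : G}
    (hx : x ∈ (T.H r : Set G)) :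
    ∀ j {t : G}, t ∈ bsProd (T.sigSet C) a j → x⁻¹ * t * x ∈ bsProd (T.sigSet C) a j := by
  intro j
  induction j with
  | zero =>
    intro t ht
    have hxi : x⁻¹ ∈ (T.H r : Set G) := inv_mem hx
    have := T.sig_conj C hra ht hxi
    simpa [bsProd_zero] using this
  | succ j ih =>
    intro t ht
    rw [bsProd_succ] at ht
    obtain ⟨p, hp, s, hs, rfl⟩ := ht
    have hxi : x⁻¹ ∈ (T.H r : Set G) := inv_mem hx
    have hs' : x⁻¹ * s * x ∈ T.sigSet C (a + (j + 1)) := by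
      have := T.sig_conj C (show r + 2 ≤ a + (j + 1) by omega) hs hxi
      simpa using this
    rw [bsProd_succ]
    exact Set.mem_mul.mpr ⟨x⁻¹ * p * x, ih hp, x⁻¹ * s * x, hs', by group⟩

end GroupTower

end Aux

/-- A balanced tower satisfies the Group Condition (GC). -/
theorem statement_9 {G : Type*} [Group G] (T : GroupTower G) (hbal : T.IsBalanced) :
    T.GC := by
  intro U hU k
  -- the basic small symmetric sets C i with C i * C i * C i ⊆ U i
  have hCex : ∀ i, ∃ Cs : Set G, T.NsMem i Cs ∧ Cs * Cs * Cs ⊆ U i := fun i =>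
    T.exists_ns i (U i) (T.nsmem_nhds (hU i))
  choose Cset hCns hC3 using hCex
  have hC1 : ∀ i, (1 : G) ∈ Cset i := fun i => (hCns i).2.2.1
  have hCmul3 : ∀ i {a b c : G}, a ∈ Cset i → b ∈ Cset i → c ∈ Cset i → a * b * c ∈ U i := by
    intro i a b c ha hb hc
    exact hC3 i (Set.mul_mem_mul (Set.mul_mem_mul ha hb) hc)
  have hCU : ∀ i, Cset i ⊆ U i := fun i g hg => by
    have := hCmul3 i hg (hC1 i) (hC1 i); simpa using this
  have hCC : ∀ i {a b : G}, a ∈ Cset i → b ∈ Cset i → a * b ∈ U i := by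
    intro i a b ha hb
    have := hCmul3 i ha hb (hC1 i); simpa using this
  have hSigU : ∀ i, T.sigSet Cset i ⊆ U i := fun i => (T.sig_subset Cset i).trans (hCU i)
  -- base of the Q-chain
  obtain ⟨Qb, hQbns, hQb3⟩ := T.exists_ns (k + 1) (Cset (k + 1))
    (T.nsmem_nhds (hCns (k + 1)))
  have hQbC : Qb ⊆ Cset (k + 1) := fun g hg => by
    have := hQb3 (Set.mul_mem_mul (Set.mul_mem_mul hg hQbns.2.2.1) hQbns.2.2.1)
    simpa using this
  -- recursive step for the Q-chain, via balancedness
  have step : ∀ j (S : Set G), T.NsMem (k + 1 + j) S →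
      ∃ S' : Set G, (T.NsMem (k + 1 + (j + 1)) S' ∧ S' ⊆ Cset (k + 1 + (j + 1))) ∧
        S' * S' ⊆ S * T.sigSet Cset (k + 2 + j) := by
    intro j S hS
    have e1 : k + j + 1 = k + 1 + j := by omega
    have hb := hbal (k + j) S (Cset (k + 2 + j))
      (by rw [e1]; exact hS.1)
      (by rw [e1]; exact T.nsmem_nhds hS)
      (by rw [show k + j + 2 = k + 2 + j by omega]; exact (hCns (k + 2 + j)).1)
      (by rw [show k + j + 2 = k + 2 + j by omega]; exact T.nsmem_nhds (hCns (k + 2 + j)))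
    have hseteq : {g ∈ (T.H (k + j + 2) : Set G) |
        ∀ h ∈ (T.H (k + j) : Set G), h * g * h⁻¹ ∈ Cset (k + 2 + j)}
        = T.sigSet Cset (k + 2 + j) := by
      simp only [GroupTower.sigSet, show k + 2 + j - 2 = k + j by omega,
        show k + 2 + j = k + j + 2 by omega]
      rfl
    rw [hseteq, show k + j + 2 = k + 1 + (j + 1) by omega] at hb
    have hbC : (((↑) : T.H (k + 1 + (j + 1)) → G) ⁻¹'
        ((S * T.sigSet Cset (k + 2 + j)) ∩ Cset (k + 1 + (j + 1))))
        ∈ @nhds _ (T.τ (k + 1 + (j + 1))) 1 := by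
      rw [Set.preimage_inter]
      exact Filter.inter_mem hb (T.nsmem_nhds (hCns (k + 1 + (j + 1))))
    obtain ⟨W, hWns, hW3⟩ := T.exists_ns _ _ hbC
    have hWsub : W ⊆ (S * T.sigSet Cset (k + 2 + j)) ∩ Cset (k + 1 + (j + 1)) := by
      intro g hg
      have := hW3 (Set.mul_mem_mul (Set.mul_mem_mul hg hWns.2.2.1) hWns.2.2.1)
      simpa using this
    refine ⟨W, ⟨hWns, fun g hg => (hWsub hg).2⟩, ?_⟩
    intro g hg
    obtain ⟨a, ha, c, hc, rfl⟩ := hg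
    have := hW3 (Set.mul_mem_mul (Set.mul_mem_mul ha hc) hWns.2.2.1)
    rw [mul_one] at this
    exact this.1
  choose stepF hstepF using step
  let Qsig : (j : ℕ) → {S : Set G // T.NsMem (k + 1 + j) S ∧ S ⊆ Cset (k + 1 + j)} :=
    fun j => Nat.rec (motive := fun j => {S : Set G // T.NsMem (k + 1 + j) S ∧ S ⊆ Cset (k + 1 + j)})
      ⟨Qb, hQbns, hQbC⟩ (fun j ih => ⟨stepF j ih.1 ih.2.1, (hstepF j ih.1 ih.2.1).1⟩) j
  let Q : ℕ → Set G := fun j => (Qsig j).1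
  have hQns : ∀ j, T.NsMem (k + 1 + j) (Q j) := fun j => (Qsig j).2.1
  have hQC : ∀ j, Q j ⊆ Cset (k + 1 + j) := fun j => (Qsig j).2.2
  have hQ1 : ∀ j, (1 : G) ∈ Q j := fun j => (hQns j).2.2.1
  have hQrel : ∀ j, Q (j + 1) * Q (j + 1) ⊆ Q j * T.sigSet Cset (k + 2 + j) := fun j =>
    (hstepF j (Q j) (Qsig j).2.1).2
  -- the sets V
  have hVex : ∀ i, ∃ Vs : Set G, T.NsMem i Vs ∧ (k ≤ i → Vs ⊆ Q (i - k)) := by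
    intro i
    by_cases hik : k ≤ i
    · have hQn := hQns (i - k)
      rw [show k + 1 + (i - k) = i + 1 by omega] at hQn
      have hnh := T.trace_nhds i _ (T.nsmem_nhds hQn)
      obtain ⟨W, hWns, hW3⟩ := T.exists_ns i _ hnh
      refine ⟨W, hWns, fun _ g hg => ?_⟩
      have := hW3 (Set.mul_mem_mul (Set.mul_mem_mul hg hWns.2.2.1) hWns.2.2.1)
      simpa using this
    · exact ⟨Cset i, hCns i, fun h => absurd h hik⟩
  choose V hVns hVQ using hVex
  have hVH : ∀ i, V i ⊆ (T.H i : Set G) := fun i => (hVns i).1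
  have hVinv : ∀ i {x : G}, x ∈ V i → x⁻¹ ∈ V i := fun i x hx => by
    rw [← (hVns i).2.2.2]; exact Set.inv_mem_inv.mpr hx
  have hVC : ∀ i, k ≤ i → V i ⊆ Cset (i + 1) := by
    intro i hik
    refine (hVQ i hik).trans ?_
    have := hQC (i - k)
    rwa [show k + 1 + (i - k) = i + 1 by omega] at this
  have hVU : ∀ i, k ≤ i → V i ⊆ U (i + 1) := fun i h => (hVC i h).trans (hCU (i + 1))
  -- THE DESCENT LEMMA
  have descent : ∀ j d (x : G), x ∈ bsProd V (k + 1 + d) j →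
      x⁻¹ ∈ Q d * bsProd (T.sigSet Cset) (k + 2 + d) j := by
    intro j
    induction j with
    | zero =>
      intro d x hx
      replace hx : x ∈ V (k + 1 + d) := hx
      have hxq : x⁻¹ ∈ Q (d + 1) := by
        have := hVQ (k + 1 + d) (by omega) (hVinv _ hx)
        rwa [show k + 1 + d - k = d + 1 by omega] at this
      have := hQrel d (Set.mul_mem_mul hxq (hQ1 (d + 1)))
      rwa [mul_one] at this
    | succ j ih =>
      intro d x hx
      rw [bsProd_succ_left, show k + 1 + d + 1 = k + 1 + (d + 1) by omega] at hx
      obtain ⟨v, hv, y, hy, rfl⟩ := hx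
      obtain ⟨ρ, hρ, t, ht, heq⟩ := ih (d + 1) y hy
      rw [show k + 2 + (d + 1) = (k + 2 + d) + 1 by omega] at ht
      have hvi : v⁻¹ ∈ V (k + 1 + d) := hVinv _ hv
      have hvH : v⁻¹ ∈ (T.H (k + 1 + d) : Set G) := hVH _ hvi
      have ht' : v * t * v⁻¹ ∈ bsProd (T.sigSet Cset) ((k + 2 + d) + 1) j := by
        have := T.mig Cset (show (k + 1 + d) + 2 ≤ (k + 2 + d) + 1 by omega) hvH j ht
        simpa using this
      have hvq : v⁻¹ ∈ Q (d + 1) := by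
        have := hVQ (k + 1 + d) (by omega) hvi
        rwa [show k + 1 + d - k = d + 1 by omega] at this
      obtain ⟨q, hq, s, hs, hqe⟩ := hQrel d (Set.mul_mem_mul hρ hvq)
      refine Set.mem_mul.mpr ⟨q, hq, s * (v * t * v⁻¹), ?_, ?_⟩
      · rw [bsProd_succ_left]
        exact Set.mul_mem_mul hs ht'
      · calc q * (s * (v * t * v⁻¹)) = (q * s) * (v * t * v⁻¹) := by group
          _ = (ρ * v⁻¹) * (v * t * v⁻¹) := by rw [show q * s = ρ * v⁻¹ from hqe]
          _ = (ρ * t) * v⁻¹ := by group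
          _ = y⁻¹ * v⁻¹ := by rw [show ρ * t = y⁻¹ from heq]
          _ = (v * y)⁻¹ := (mul_inv_rev v y).symm
  -- THE INTERLEAVING LEMMA
  have inter : ∀ js jv d (x y : G), x ∈ bsProd (T.sigSet Cset) (k + 2 + d) js →
      y ∈ bsProd V (k + 1 + d) jv → x * y ∈ bsProd U (k + 2 + d) (max js jv) := by
    intro js
    induction js with
    | zero =>
      intro jv d x y hx hy
      replace hx : x ∈ T.sigSet Cset (k + 2 + d) := hx
      have hxC : x ∈ Cset (k + 2 + d) := T.sig_subset Cset _ hx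
      cases jv with
      | zero =>
        replace hy : y ∈ V (k + 1 + d) := hy
        have hyC : y ∈ Cset (k + 2 + d) := by
          have := hVC (k + 1 + d) (by omega) hy
          rwa [show k + 1 + d + 1 = k + 2 + d by omega] at this
        rw [Nat.max_self]
        exact hCC _ hxC hyC
      | succ t =>
        rw [bsProd_succ_left, show k + 1 + d + 1 = k + 2 + d by omega] at hy
        obtain ⟨w, hw, y', hy', rfl⟩ := hy
        have hwC : w ∈ Cset (k + 2 + d) := by
          have := hVC (k + 1 + d) (by omega) hw
          rwa [show k + 1 + d + 1 = k + 2 + d by omega] at this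
        have hy'' : y' ∈ bsProd U ((k + 2 + d) + 1) t :=
          bsProd_shift_mono _ _ (fun i hi => hVU i (by omega)) hy'
        rw [Nat.max_eq_right (Nat.zero_le _), bsProd_succ_left]
        exact Set.mem_mul.mpr ⟨x * w, hCC _ hxC hwC, y', hy'', by group⟩
    | succ s ihs =>
      intro jv d x y hx hy
      rw [bsProd_succ_left] at hx
      obtain ⟨σ, hσ, Tt, hTt, rfl⟩ := hx
      have hσC : σ ∈ Cset (k + 2 + d) := T.sig_subset Cset _ hσ
      cases jv with
      | zero =>
        replace hy : y ∈ V (k + 1 + d) := hy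
        have hyH : y ∈ (T.H (k + 1 + d) : Set G) := hVH _ hy
        have hT' : y⁻¹ * Tt * y ∈ bsProd (T.sigSet Cset) ((k + 2 + d) + 1) s :=
          T.mig Cset (by omega) hyH s hTt
        have hyC : y ∈ Cset (k + 2 + d) := by
          have := hVC (k + 1 + d) (by omega) hy
          rwa [show k + 1 + d + 1 = k + 2 + d by omega] at this
        have hT'' : y⁻¹ * Tt * y ∈ bsProd U ((k + 2 + d) + 1) s :=
          bsProd_mono _ _ (fun i _ => hSigU i) hT'
        rw [Nat.max_eq_left (Nat.zero_le _), bsProd_succ_left]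
        exact Set.mem_mul.mpr ⟨σ * y, hCC _ hσC hyC, y⁻¹ * Tt * y, hT'', by group⟩
      | succ t =>
        rw [bsProd_succ_left, show k + 1 + d + 1 = k + 1 + (d + 1) by omega] at hy
        obtain ⟨w, hw, y', hy', rfl⟩ := hy
        have hwH : w ∈ (T.H (k + 1 + d) : Set G) := hVH _ hw
        have hT' : w⁻¹ * Tt * w ∈ bsProd (T.sigSet Cset) ((k + 2 + d) + 1) s :=
          T.mig Cset (by omega) hwH s hTt
        rw [show (k + 2 + d) + 1 = k + 2 + (d + 1) by omega] at hT'
        have hrec := ihs t (d + 1) _ _ hT' hy'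
        rw [show k + 2 + (d + 1) = (k + 2 + d) + 1 by omega] at hrec
        have hwC : w ∈ Cset (k + 2 + d) := by
          have := hVC (k + 1 + d) (by omega) hw
          rwa [show k + 1 + d + 1 = k + 2 + d by omega] at this
        rw [Nat.succ_max_succ, bsProd_succ_left]
        exact Set.mem_mul.mpr
          ⟨σ * w, hCC _ hσC hwC, (w⁻¹ * Tt * w) * y', hrec, by group⟩
  -- MAIN ASSEMBLY
  have h1U : (1 : G) ∈ U k := (hU k).2.2.1
  have prep : ∀ j (x : G), x ∈ bsProd U (k + 1) j → x ∈ bsPlus U k := by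
    intro j x hx
    refine Set.mem_iUnion.mpr ⟨j + 1, ?_⟩
    rw [bsProd_succ_left]
    exact Set.mem_mul.mpr ⟨1, h1U, x, hx, one_mul x⟩
  have hVkC : V k ⊆ Cset (k + 1) := hVC k le_rfl
  have main : ∀ j1 j2 (a b : G), a ∈ bsProd V k j1 → b ∈ bsProd V k j2 →
      a⁻¹ * b ∈ bsPlus U k := by
    intro j1 j2 a b ha hb
    cases j1 with
    | zero =>
      replace ha : a ∈ V k := ha
      have hai : a⁻¹ ∈ V k := hVinv _ ha
      cases j2 with
      | zero =>
        replace hb : b ∈ V k := hb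
        exact prep 0 _ (hCC (k + 1) (hVkC hai) (hVkC hb))
      | succ t =>
        rw [bsProd_succ_left] at hb
        obtain ⟨w, hw, B, hB, rfl⟩ := hb
        have h2 : B ∈ bsProd U ((k + 1) + 1) t :=
          bsProd_shift_mono _ _ (fun i hi => hVU i (by omega)) hB
        refine prep (t + 1) _ ?_
        rw [bsProd_succ_left]
        exact Set.mem_mul.mpr ⟨a⁻¹ * w, hCC (k + 1) (hVkC hai) (hVkC hw), B, h2, by group⟩
    | succ s =>
      rw [bsProd_succ_left] at ha
      obtain ⟨v, hv, A, hA, rfl⟩ := ha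
      have hA' : A ∈ bsProd V (k + 1 + 0) s := hA
      obtain ⟨ρ, hρ, Tt, hTt, heq⟩ := descent s 0 A hA'
      have hρC : ρ ∈ Cset (k + 1) := hQC 0 hρ
      have hvV : v⁻¹ ∈ V k := hVinv _ hv
      cases j2 with
      | zero =>
        replace hb : b ∈ V k := hb
        have hzH : v⁻¹ * b ∈ (T.H k : Set G) := mul_mem (hVH k hvV) (hVH k hb)
        have hmig := T.mig Cset (show k + 2 ≤ k + 2 + 0 by omega) hzH s hTt
        have hTU : (v⁻¹ * b)⁻¹ * Tt * (v⁻¹ * b) ∈ bsProd U ((k + 1) + 1) s :=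
          bsProd_mono _ _ (fun i _ => hSigU i) hmig
        refine prep (s + 1) _ ?_
        rw [bsProd_succ_left]
        refine Set.mem_mul.mpr ⟨ρ * v⁻¹ * b, hCmul3 (k + 1) hρC (hVkC hvV) (hVkC hb),
          (v⁻¹ * b)⁻¹ * Tt * (v⁻¹ * b), hTU, ?_⟩
        calc (ρ * v⁻¹ * b) * ((v⁻¹ * b)⁻¹ * Tt * (v⁻¹ * b))
            = (ρ * Tt) * v⁻¹ * b := by group
          _ = A⁻¹ * v⁻¹ * b := by rw [show ρ * Tt = A⁻¹ from heq]
          _ = (v * A)⁻¹ * b := by rw [mul_inv_rev]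
      | succ t =>
        rw [bsProd_succ_left] at hb
        obtain ⟨w, hw, B, hB, rfl⟩ := hb
        have hzH : v⁻¹ * w ∈ (T.H k : Set G) := mul_mem (hVH k hvV) (hVH k hw)
        have hmig := T.mig Cset (show k + 2 ≤ k + 2 + 0 by omega) hzH s hTt
        have hB' : B ∈ bsProd V (k + 1 + 0) t := hB
        have hrec := inter s t 0 _ _ hmig hB'
        refine prep (max s t + 1) _ ?_
        rw [bsProd_succ_left]
        refine Set.mem_mul.mpr ⟨ρ * v⁻¹ * w, hCmul3 (k + 1) hρC (hVkC hvV) (hVkC hw),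
          ((v⁻¹ * w)⁻¹ * Tt * (v⁻¹ * w)) * B, hrec, ?_⟩
        calc (ρ * v⁻¹ * w) * (((v⁻¹ * w)⁻¹ * Tt * (v⁻¹ * w)) * B)
            = (ρ * Tt) * v⁻¹ * (w * B) := by group
          _ = A⁻¹ * v⁻¹ * (w * B) := by rw [show ρ * Tt = A⁻¹ from heq]
          _ = (v * A)⁻¹ * (w * B) := by rw [mul_inv_rev]
  refine ⟨V, hVns, ?_⟩
  intro x hx
  obtain ⟨ai, hai, b, hb, rfl⟩ := hx
  rw [Set.mem_inv] at hai
  obtain ⟨j1, ha⟩ := Set.mem_iUnion.mp hai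
  obtain ⟨j2, hb'⟩ := Set.mem_iUnion.mp hb
  have := main j1 j2 (ai⁻¹) b ha hb'
  rwa [inv_inv] at this
end

section
/- Let {G_n}_{n∈ω} be a closed tower of abelian Hausdorff topological groups. Then glim G_n is complete (with respect to its canonical group uniformity) if and only if every G_n is complete. -/
open Topology Filter Set Pointwise

section SetLemmas

variable {G : Type*} [CommGroup G] {U V : ℕ → Set G} {k j m : ℕ}

lemma one_mem_bsProd (h : ∀ i, 1 ∈ U i) (k : ℕ) : ∀ j, (1 : G) ∈ bsProd U k j
  | 0 => h k
  | j + 1 => by simpa [bsProd] using Set.mul_mem_mul (one_mem_bsProd h k j) (h (k + (j + 1)))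

lemma bsProd_mono_s10 (h : ∀ i, U i ⊆ V i) (k : ℕ) : ∀ j, bsProd U k j ⊆ bsProd V k j
  | 0 => h k
  | j + 1 => Set.mul_subset_mul (bsProd_mono_s10 h k j) (h _)

lemma bsProd_cons (k : ℕ) : ∀ j, bsProd U k (j + 1) = U k * bsProd U (k + 1) j
  | 0 => by simp [bsProd]
  | j + 1 => by
    show bsProd U k (j + 1) * U (k + (j + 2)) = _
    rw [bsProd_cons k j, mul_assoc]
    have : k + (j + 2) = (k + 1) + (j + 1) := by ring
    rw [this]
    rfl

lemma bsProd_subset_succ (h : ∀ i, 1 ∈ U i) (k j : ℕ) :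
    bsProd U k j ⊆ bsProd U k (j + 1) := fun x hx => by
  simpa [bsProd] using Set.mul_mem_mul hx (h (k + (j + 1)))

lemma bsProd_mono_j (h : ∀ i, 1 ∈ U i) (k : ℕ) {j j' : ℕ} (hj : j ≤ j') :
    bsProd U k j ⊆ bsProd U k j' := by
  induction j' with
  | zero => simpa [Nat.le_zero.mp hj] using subset_rfl
  | succ j' ih =>
    rcases Nat.lt_or_ge j (j' + 1) with h' | h'
    · exact (ih (Nat.lt_succ_iff.mp h')).trans (bsProd_subset_succ h k j')
    · have : j = j' + 1 := le_antisymm hj h'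
      subst this; exact subset_rfl

lemma bsProd_shift (h : ∀ i, 1 ∈ U i) (k j : ℕ) :
    bsProd U (k + 1) j ⊆ bsProd U k (j + 1) := by
  rw [bsProd_cons]
  intro x hx
  simpa using Set.mul_mem_mul (h k) hx

lemma subset_bsPlus_self (k : ℕ) : bsProd U k j ⊆ bsPlus U k :=
  Set.subset_iUnion (fun j => bsProd U k j) j

lemma bsPlus_anti (h : ∀ i, 1 ∈ U i) (hk : k ≤ m) : bsPlus U m ⊆ bsPlus U k := by
  induction m, hk using Nat.le_induction with
  | base => exact subset_rfl
  | succ m hm ih =>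
    refine subset_trans ?_ ih
    refine Set.iUnion_subset fun j => ?_
    exact (bsProd_shift h m j).trans (subset_bsPlus_self m)

lemma subset_bsPlus (h : ∀ i, 1 ∈ U i) (hk : k ≤ m) : U m ⊆ bsPlus U k :=
  (subset_bsPlus_self (U := U) (j := 0) m).trans (bsPlus_anti h hk)

lemma one_mem_bsPlus (h : ∀ i, 1 ∈ U i) (k : ℕ) : (1 : G) ∈ bsPlus U k :=
  subset_bsPlus_self (j := 0) k (h k)

lemma one_mem_inv_bsPlus (h : ∀ i, 1 ∈ U i) (k : ℕ) : (1 : G) ∈ (bsPlus U k)⁻¹ :=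
  Set.mem_inv.mpr (by simpa using one_mem_bsPlus h k)

lemma one_mem_bsU (h : ∀ i, 1 ∈ U i) (k : ℕ) : (1 : G) ∈ bsU U k := by
  have := Set.mul_mem_mul (one_mem_inv_bsPlus h k) (one_mem_bsPlus h k)
  rwa [one_mul] at this

lemma subset_bsU (h : ∀ i, 1 ∈ U i) (k : ℕ) : bsPlus U k ⊆ bsU U k := fun x hx => by
  have := Set.mul_mem_mul (one_mem_inv_bsPlus h k) hx
  rwa [one_mul] at this

lemma bsProd_mul (k : ℕ) : ∀ j, bsProd U k j * bsProd V k j = bsProd (fun i => U i * V i) k j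
  | 0 => rfl
  | j + 1 => by
    show bsProd U k j * U _ * (bsProd V k j * V _) = _
    rw [mul_mul_mul_comm, bsProd_mul k j]
    rfl

lemma bsPlus_mul (hU : ∀ i, 1 ∈ U i) (hV : ∀ i, 1 ∈ V i) (k : ℕ) :
    bsPlus U k * bsPlus V k ⊆ bsPlus (fun i => U i * V i) k := by
  rintro x ⟨a, ha, b, hb, rfl⟩
  rcases Set.mem_iUnion.mp ha with ⟨j₁, hj₁⟩
  rcases Set.mem_iUnion.mp hb with ⟨j₂, hj₂⟩
  have h1 : a ∈ bsProd U k (max j₁ j₂) := bsProd_mono_j hU k (le_max_left _ _) hj₁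
  have h2 : b ∈ bsProd V k (max j₁ j₂) := bsProd_mono_j hV k (le_max_right _ _) hj₂
  have := Set.mul_mem_mul h1 h2
  rw [bsProd_mul] at this
  exact subset_bsPlus_self k this

lemma bsProd_inv (k : ℕ) : ∀ j, (bsProd U k j)⁻¹ = bsProd (fun i => (U i)⁻¹) k j
  | 0 => rfl
  | j + 1 => by
    show (bsProd U k j * U _)⁻¹ = _
    rw [mul_inv_rev, mul_comm, bsProd_inv k j]
    rfl

lemma bsPlus_inv (k : ℕ) : (bsPlus U k)⁻¹ = bsPlus (fun i => (U i)⁻¹) k := by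
  simp only [bsPlus, Set.iUnion_inv, bsProd_inv]

lemma bsU_subset_bsPlus_invmul (hU : ∀ i, 1 ∈ U i) (k : ℕ) :
    bsU U k ⊆ bsPlus (fun i => (U i)⁻¹ * U i) k := by
  rw [bsU, bsPlus_inv]
  exact bsPlus_mul (fun i => by simpa using hU i) hU k

lemma bsPlus_invmul_subset_bsU (k : ℕ) :
    bsPlus (fun i => (U i)⁻¹ * U i) k ⊆ bsU U k := by
  refine Set.iUnion_subset fun j => ?_
  have : bsProd (fun i => (U i)⁻¹ * U i) k j = (bsProd U k j)⁻¹ * bsProd U k j := by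
    rw [bsProd_inv, bsProd_mul]
  rw [this]
  exact Set.mul_subset_mul (Set.inv_subset_inv.mpr (subset_bsPlus_self k)) (subset_bsPlus_self k)

lemma bsU_mono (h : ∀ i, U i ⊆ V i) (k : ℕ) : bsU U k ⊆ bsU V k := by
  have h1 : bsPlus U k ⊆ bsPlus V k := Set.iUnion_subset fun j =>
    (bsProd_mono_s10 h k j).trans (subset_bsPlus_self k)
  exact Set.mul_subset_mul (Set.inv_subset_inv.mpr h1) h1

lemma bsU_anti (h : ∀ i, 1 ∈ U i) (hk : k ≤ m) : bsU U m ⊆ bsU U k := by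
  have h1 := bsPlus_anti h hk
  exact Set.mul_subset_mul (Set.inv_subset_inv.mpr h1) h1

lemma bsProd_append (k : ℕ) (a : ℕ) : ∀ b, bsProd U k (a + 1 + b) = bsProd U k a * bsProd U (k + a + 1) b
  | 0 => rfl
  | b + 1 => by
    show bsProd U k (a + 1 + b) * U (k + (a + 1 + b + 1)) = _
    rw [bsProd_append k a b, mul_assoc]
    have : k + (a + 1 + b + 1) = (k + a + 1) + (b + 1) := by ring
    rw [this]
    rfl

lemma bsProd_subset_subgroup {K : Subgroup G} (m : ℕ) :
    ∀ j, (∀ i, m ≤ i → i ≤ m + j → U i ⊆ (K : Set G)) → bsProd U m j ⊆ (K : Set G)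
  | 0, h => h m le_rfl (by simp)
  | j + 1, h => by
    rintro x ⟨a, ha, b, hb, rfl⟩
    exact mul_mem
      (bsProd_subset_subgroup m j (fun i h1 h2 => h i h1 (by omega)) ha)
      (h (m + (j + 1)) (by omega) le_rfl hb)


lemma bsProd_mono'' {k₀ : ℕ} (h : ∀ i, k₀ ≤ i → U i ⊆ V i) (k : ℕ) (hk : k₀ ≤ k) :
    ∀ j, bsProd U k j ⊆ bsProd V k j
  | 0 => h k hk
  | j + 1 => Set.mul_subset_mul (bsProd_mono'' h k hk j) (h _ (by omega))


end SetLemmas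

namespace GroupTower

variable {G : Type*} [CommGroup G] (T : GroupTower G)

lemma le_of_le {n m : ℕ} (h : n ≤ m) : T.H n ≤ T.H m := by
  induction m, h using Nat.le_induction with
  | base => exact le_rfl
  | succ m hm ih => exact ih.trans (T.mono m)

lemma coe_subset_of_le {n m : ℕ} (h : n ≤ m) : (T.H n : Set G) ⊆ (T.H m : Set G) :=
  fun _ hx => T.le_of_le h hx

/-- The inclusion `H n → H m` is continuous. -/
lemma cont_inclusion {n m : ℕ} (h : n ≤ m) :
    Continuous[T.τ n, T.τ m] (Subgroup.inclusion (T.le_of_le h)) := by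
  induction m, h using Nat.le_induction with
  | base =>
    letI := T.τ n
    have : ⇑(Subgroup.inclusion (T.le_of_le (le_refl n))) = id := by
      funext x; exact Subtype.ext rfl
    rw [this]; exact continuous_id
  | succ m hm ih =>
    letI := T.τ n
    letI := T.τ m
    letI := T.τ (m + 1)
    have : ⇑(Subgroup.inclusion (T.le_of_le (Nat.le_succ_of_le hm))) =
        ⇑(Subgroup.inclusion (T.mono m)) ∘ ⇑(Subgroup.inclusion (T.le_of_le hm)) := by
      funext x; exact Subtype.ext rfl
    rw [this]
    exact (T.incl_cont m).comp ih

lemma cont_coe_of_le {n m : ℕ} (h : n ≤ m) :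
    Continuous[T.τ n, T.τ m] (fun x : T.H n => (⟨(x : G), T.le_of_le h x.2⟩ : T.H m)) :=
  T.cont_inclusion h

lemma NsMem.subset_H {n : ℕ} {U : Set G} (h : T.NsMem n U) : U ⊆ (T.H n : Set G) := h.1

lemma NsMem.isOpen {n : ℕ} {U : Set G} (h : T.NsMem n U) :
    IsOpen[T.τ n] (((↑) : T.H n → G) ⁻¹' U) := h.2.1

lemma NsMem.one_mem {n : ℕ} {U : Set G} (h : T.NsMem n U) : (1 : G) ∈ U := h.2.2.1

lemma NsMem.inv_eq {n : ℕ} {U : Set G} (h : T.NsMem n U) : U⁻¹ = U := h.2.2.2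

lemma NsMem.isOpen_pre_of_le {n m : ℕ} {Uset : Set G} (h : T.NsMem m Uset) (hnm : n ≤ m) :
    IsOpen[T.τ n] (((↑) : T.H n → G) ⁻¹' Uset) := by
  letI := T.τ n
  letI := T.τ m
  have heq : ((↑) : T.H n → G) ⁻¹' Uset =
      (Subgroup.inclusion (T.le_of_le hnm)) ⁻¹' (((↑) : T.H m → G) ⁻¹' Uset) := rfl
  rw [heq]
  exact (T.cont_inclusion hnm).isOpen_preimage _ (h.isOpen T)

lemma coe_inv_eq (n : ℕ) : ((T.H n : Set G))⁻¹ = (T.H n : Set G) := by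
  ext x
  simp only [Set.mem_inv, SetLike.mem_coe]
  exact ⟨fun h => by simpa using inv_mem h, fun h => inv_mem h⟩

lemma nsMem_coe (n : ℕ) : T.NsMem n (T.H n : Set G) := by
  letI := T.τ n
  refine ⟨subset_rfl, ?_, one_mem _, T.coe_inv_eq n⟩
  have : ((↑) : T.H n → G) ⁻¹' (T.H n : Set G) = Set.univ := by
    ext x; simp [x.2]
  rw [this]
  exact isOpen_univ

lemma NsMem.inter {n : ℕ} {U V : Set G} (hU : T.NsMem n U) (hV : T.NsMem n V) :
    T.NsMem n (U ∩ V) := by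
  refine ⟨fun x hx => hU.1 hx.1, ?_, ⟨hU.one_mem T, hV.one_mem T⟩, ?_⟩
  · letI := T.τ n
    rw [Set.preimage_inter]
    exact (hU.isOpen T).inter (hV.isOpen T)
  · rw [Set.inter_inv, hU.inv_eq T, hV.inv_eq T]

open scoped Classical in
lemma nsMem_finsetInter {n : ℕ} (s : Finset ℕ) (f : ℕ → Set G)
    (hf : ∀ a ∈ s, T.NsMem n (f a)) :
    T.NsMem n ((T.H n : Set G) ∩ ⋂ a ∈ s, f a) := by
  induction s using Finset.induction with
  | empty => simpa using T.nsMem_coe n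
  | @insert a s ha ih =>
    have h1 : T.NsMem n ((T.H n : Set G) ∩ ⋂ b ∈ s, f b) :=
      ih (fun b hb => hf b (Finset.mem_insert_of_mem hb))
    have h2 : T.NsMem n (f a) := hf a (Finset.mem_insert_self a s)
    have : ((T.H n : Set G) ∩ ⋂ b ∈ insert a s, f b) =
        ((T.H n : Set G) ∩ ⋂ b ∈ s, f b) ∩ f a := by
      simp only [Finset.set_biInter_insert]
      ext x; constructor
      · rintro ⟨h, h', h''⟩; exact ⟨⟨h, h''⟩, h'⟩
      · rintro ⟨⟨h, h''⟩, h'⟩; exact ⟨h, h', h''⟩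
    rw [this]
    exact h1.inter T h2

/-- From a neighborhood of `1` in `G_n` one can extract an `NsMem` set. -/
lemma exists_nsMem_subset (n : ℕ) {V : Set (T.H n)} (hV : V ∈ @nhds _ (T.τ n) 1) :
    ∃ Z : Set G, T.NsMem n Z ∧ (((↑) : T.H n → G) ⁻¹' Z) ⊆ V ∧
      Z ⊆ ((↑) : T.H n → G) '' V := by
  letI := T.τ n
  haveI := T.topGroup n
  obtain ⟨O, hOV, hOopen, hO1⟩ := mem_nhds_iff.mp hV
  set W : Set (T.H n) := O ∩ O⁻¹ with hW
  have hWopen : IsOpen W := hOopen.inter hOopen.inv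
  have hW1 : (1 : T.H n) ∈ W := ⟨hO1, by simpa using hO1⟩
  have hWsymm : W⁻¹ = W := by rw [hW, Set.inter_inv, inv_inv, Set.inter_comm]
  have hWV : W ⊆ V := fun x hx => hOV hx.1
  refine ⟨((↑) : T.H n → G) '' W, ⟨?_, ?_, ?_, ?_⟩, ?_, Set.image_mono hWV⟩
  · rintro x ⟨y, -, rfl⟩; exact y.2
  · rw [Set.preimage_image_eq _ Subtype.coe_injective]
    exact hWopen
  · exact ⟨1, hW1, rfl⟩
  · ext x
    simp only [Set.mem_inv]
    constructor
    · rintro ⟨y, hy, hxy⟩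
      refine ⟨y⁻¹, ?_, ?_⟩
      · rw [← hWsymm]; simpa using hy
      · have : (y : G) = x⁻¹ := hxy
        simp [this]
    · rintro ⟨y, hy, rfl⟩
      exact ⟨y⁻¹, by rw [← hWsymm]; simpa using hy, by simp⟩
  · rw [Set.preimage_image_eq _ Subtype.coe_injective]
    exact hWV

lemma NsMem.exists_sq {n : ℕ} {U : Set G} (h : T.NsMem n U) :
    ∃ Z : Set G, T.NsMem n Z ∧ Z ⊆ U ∧ Z * Z ⊆ U := by
  letI := T.τ n
  haveI := T.topGroup n
  have hU1 : (((↑) : T.H n → G) ⁻¹' U) ∈ @nhds _ (T.τ n) 1 :=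
    (h.isOpen T).mem_nhds (by simpa using h.one_mem T)
  obtain ⟨V, hV, hVmul⟩ := exists_nhds_one_split hU1
  obtain ⟨Z, hZ, hZV, hZim⟩ := T.exists_nsMem_subset n hV
  refine ⟨Z, hZ, ?_, ?_⟩
  · intro x hx
    obtain ⟨y, hy, rfl⟩ := hZim hx
    have := hVmul y hy 1 (mem_of_mem_nhds hV)
    simpa using this
  · rintro x ⟨a, ha, b, hb, rfl⟩
    obtain ⟨ya, hya, rfl⟩ := hZim ha
    obtain ⟨yb, hyb, rfl⟩ := hZim hb
    have : ya * yb ∈ ((↑) : T.H n → G) ⁻¹' U := hVmul ya hya yb hyb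
    simpa using this

lemma NsMem.exists_cube {n : ℕ} {U : Set G} (h : T.NsMem n U) :
    ∃ Z : Set G, T.NsMem n Z ∧ Z ⊆ U ∧ Z * Z ⊆ U ∧ Z * Z * Z ⊆ U := by
  obtain ⟨Z₁, hZ₁, hZ₁U, hZ₁sq⟩ := h.exists_sq T
  obtain ⟨Z, hZ, hZZ₁, hZsq⟩ := hZ₁.exists_sq T
  refine ⟨Z, hZ, hZZ₁.trans hZ₁U, hZsq.trans hZ₁U, ?_⟩
  exact (Set.mul_subset_mul hZsq hZZ₁).trans hZ₁sq

lemma step_ns (hcl : T.IsClosedTower) (j : ℕ) {S : Set G} (hS : T.NsMem j S) :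
    ∃ Z : Set G, T.NsMem (j + 1) Z ∧ (Z⁻¹ * Z * Z) ∩ (T.H j : Set G) ⊆ S := by
  letI := T.τ (j + 1)
  haveI := T.topGroup (j + 1)
  have hSopen := hS.isOpen T
  rw [(hcl j).1] at hSopen
  obtain ⟨O, hOopen, hOpre⟩ := isOpen_induced_iff.mp hSopen
  have h1O : (1 : T.H (j + 1)) ∈ O := by
    have h1 : (1 : T.H j) ∈ Subgroup.inclusion (T.mono j) ⁻¹' O := by
      rw [hOpre]
      simpa using hS.one_mem T
    simpa using h1
  obtain ⟨V₁, hV₁, hsp1⟩ := exists_nhds_one_split (hOopen.mem_nhds h1O)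
  obtain ⟨V₂, hV₂, hsp2⟩ := exists_nhds_one_split hV₁
  have hV₂V₁ : V₂ ⊆ V₁ := fun v hv => by
    simpa using hsp2 v hv 1 (mem_of_mem_nhds hV₂)
  obtain ⟨Z, hZ, hZpre, _⟩ := T.exists_nsMem_subset (j + 1) hV₂
  refine ⟨Z, hZ, ?_⟩
  rw [hZ.inv_eq T]
  rintro x ⟨hxZ, hxj⟩
  obtain ⟨ab, ⟨a, ha, b, hb, rfl⟩, c, hc, rfl⟩ := hxZ
  have hxj' : a * b * c ∈ T.H j := hxj
  have hxS : (⟨a * b * c, hxj'⟩ : T.H j) ∈ ((↑) : T.H j → G) ⁻¹' S := by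
    rw [← hOpre]
    show Subgroup.inclusion (T.mono j) ⟨a * b * c, hxj'⟩ ∈ O
    have haH : a ∈ T.H (j + 1) := hZ.subset_H T ha
    have hbH : b ∈ T.H (j + 1) := hZ.subset_H T hb
    have hcH : c ∈ T.H (j + 1) := hZ.subset_H T hc
    have haV : (⟨a, haH⟩ : T.H (j + 1)) ∈ V₂ := hZpre ha
    have hbV : (⟨b, hbH⟩ : T.H (j + 1)) ∈ V₂ := hZpre hb
    have hcV : (⟨c, hcH⟩ : T.H (j + 1)) ∈ V₂ := hZpre hc
    have : (⟨a, haH⟩ : T.H (j + 1)) * ⟨b, hbH⟩ * ⟨c, hcH⟩ ∈ O :=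
      hsp1 _ (hsp2 _ haV _ hbV) _ (hV₂V₁ hcV)
    have heq : Subgroup.inclusion (T.mono j) ⟨a * b * c, hxj'⟩ =
        (⟨a, haH⟩ : T.H (j + 1)) * ⟨b, hbH⟩ * ⟨c, hcH⟩ := by
      apply Subtype.ext
      rfl
    rw [heq]
    exact this
  exact hxS

lemma exists_chain (hcl : T.IsClosedTower) (m : ℕ) {B : Set G} (hB : T.NsMem m B) :
    ∃ S : ℕ → Set G, S 0 = B ∧ (∀ j, T.NsMem (m + j) (S j)) ∧
      ∀ j, ((S (j + 1))⁻¹ * S (j + 1) * S (j + 1)) ∩ (T.H (m + j) : Set G) ⊆ S j := by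
  have hstep : ∀ (j : ℕ) (S : Set G), T.NsMem j S →
      ∃ Z : Set G, T.NsMem (j + 1) Z ∧ (Z⁻¹ * Z * Z) ∩ (T.H j : Set G) ⊆ S :=
    fun j S hS => T.step_ns hcl j hS
  choose F hF1 hF2 using hstep
  let g : ∀ j : ℕ, {S : Set G // T.NsMem (m + j) S} := fun j =>
    Nat.rec ⟨B, hB⟩ (fun j p => ⟨F (m + j) p.1 p.2, hF1 (m + j) p.1 p.2⟩) j
  exact ⟨fun j => (g j).1, rfl, fun j => (g j).2, fun j => hF2 (m + j) (g j).1 (g j).2⟩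

lemma peel (m : ℕ) (U Sq : ℕ → Set G)
    (hU1 : ∀ i, 1 ∈ U i) (hUH : ∀ i, U i ⊆ (T.H i : Set G))
    (hS1 : ∀ j, (1 : G) ∈ Sq j)
    (hchain : ∀ j, ((U (m + j + 1))⁻¹ * U (m + j + 1) * Sq (j + 1)) ∩ (T.H (m + j) : Set G)
      ⊆ Sq j) :
    bsU U m ∩ (T.H m : Set G) ⊆ (U m)⁻¹ * U m * Sq 0 := by
  have hE_H : ∀ i, (U i)⁻¹ * U i ⊆ (T.H i : Set G) := by
    rintro i x ⟨a, ha, b, hb, rfl⟩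
    have ha' : a⁻¹ ∈ T.H i := hUH i (Set.mem_inv.mp ha)
    exact mul_mem (by simpa using inv_mem ha') (hUH i hb)
  have Q : ∀ j, ∀ x, x ∈ bsProd (fun i => (U i)⁻¹ * U i) m j * Sq j →
      x ∈ (T.H m : Set G) → x ∈ ((U m)⁻¹ * U m) * Sq 0 := by
    intro j
    induction j with
    | zero => intro x hx _; exact hx
    | succ j ih =>
      rintro x ⟨q, hq, s, hs, rfl⟩ hxm
      rcases hq with ⟨p, hp, e, he, rfl⟩
      have hpH : p ∈ (T.H (m + j) : Set G) :=
        bsProd_subset_subgroup m j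
          (fun i h1 h2 => (hE_H i).trans (T.coe_subset_of_le h2)) hp
      have hxH : p * e * s ∈ (T.H (m + j) : Set G) :=
        T.coe_subset_of_le (Nat.le_add_right m j) hxm
      have hesH : e * s ∈ (T.H (m + j) : Set G) := by
        have heq : e * s = p⁻¹ * (p * e * s) := by group
        rw [heq]
        exact mul_mem (inv_mem hpH) hxH
      have hesE : e * s ∈ ((U (m + j + 1))⁻¹ * U (m + j + 1)) * Sq (j + 1) :=
        Set.mul_mem_mul he hs
      have hesS : e * s ∈ Sq j := hchain j ⟨hesE, hesH⟩
      have hmem : p * (e * s) ∈ bsProd (fun i => (U i)⁻¹ * U i) m j * Sq j :=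
        Set.mul_mem_mul hp hesS
      have hxm' : p * (e * s) ∈ (T.H m : Set G) := by
        rw [← mul_assoc]; exact hxm
      have hfin := ih _ hmem hxm'
      show p * e * s ∈ (U m)⁻¹ * U m * Sq 0
      rw [mul_assoc p e s]
      exact hfin
  rintro x ⟨hx, hxm⟩
  have hx' : x ∈ bsPlus (fun i => (U i)⁻¹ * U i) m := bsU_subset_bsPlus_invmul hU1 m hx
  obtain ⟨j, hj⟩ := Set.mem_iUnion.mp hx'
  have : x ∈ bsProd (fun i => (U i)⁻¹ * U i) m j * Sq j := by
    have := Set.mul_mem_mul hj (hS1 j)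
    rwa [mul_one] at this
  exact Q j x this hxm

lemma exists_nsSeq (hcl : T.IsClosedTower) (m : ℕ) {B : Set G} (hB : T.NsMem m B) :
    ∃ Useq : ℕ → Set G, (∀ i, T.NsMem i (Useq i)) ∧ Useq m = B ∧
      bsU Useq m ∩ (T.H m : Set G) ⊆ B⁻¹ * B * B := by
  obtain ⟨S, hS0, hSns, hSchain⟩ := T.exists_chain hcl m hB
  set Useq : ℕ → Set G := fun i => if h : m ≤ i then S (i - m) else (T.H i : Set G) with hUseq
  have hU_eq : ∀ j, Useq (m + j) = S j := by
    intro j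
    simp only [hUseq]
    rw [dif_pos (Nat.le_add_right m j)]
    have h2 : m + j - m = j := by omega
    rw [h2]
  have hUm : Useq m = B := by
    have := hU_eq 0
    simpa [hS0] using this
  have hUns : ∀ i, T.NsMem i (Useq i) := by
    intro i
    by_cases h : m ≤ i
    · have : Useq i = S (i - m) := by simp only [hUseq]; rw [dif_pos h]
      rw [this]
      have := hSns (i - m)
      have heq : m + (i - m) = i := by omega
      rwa [heq] at this
    · have : Useq i = (T.H i : Set G) := by simp only [hUseq]; rw [dif_neg h]
      rw [this]
      exact T.nsMem_coe i
  refine ⟨Useq, hUns, hUm, ?_⟩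
  have hpeel := T.peel m Useq S
    (fun i => (hUns i).one_mem T) (fun i => (hUns i).subset_H T)
    (fun j => (hSns j).one_mem T)
    (fun j => by
      have h1 : Useq (m + j + 1) = S (j + 1) := hU_eq (j + 1)
      rw [h1]
      exact hSchain j)
  rw [hUm, hS0] at hpeel
  exact hpeel

lemma key_embed (hcl : T.IsClosedTower) (n : ℕ) {V : Set (T.H n)}
    (hV : V ∈ @nhds _ (T.τ n) 1) :
    ∃ Useq : ℕ → Set G, (∀ i, T.NsMem i (Useq i)) ∧
      ∀ h : T.H n, (h : G) ∈ bsU Useq n → h ∈ V := by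
  obtain ⟨Z₀, hZ₀, hZ₀pre, _⟩ := T.exists_nsMem_subset n hV
  obtain ⟨Z, hZ, hZsub, hZsq, hZcube⟩ := hZ₀.exists_cube T
  obtain ⟨Useq, hUseq, hUm, hkey⟩ := T.exists_nsSeq hcl n hZ
  refine ⟨Useq, hUseq, fun h hh => ?_⟩
  have h1 : (h : G) ∈ Z⁻¹ * Z * Z := hkey ⟨hh, h.2⟩
  rw [hZ.inv_eq T] at h1
  have h2 : (h : G) ∈ Z₀ := hZcube h1
  exact hZ₀pre h2

lemma closed_in (hcl : T.IsClosedTower) {n m : ℕ} (hnm : n ≤ m) :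
    IsClosed[T.τ m] (((↑) : T.H m → G) ⁻¹' (T.H n : Set G)) := by
  induction m, hnm using Nat.le_induction with
  | base =>
    letI := T.τ n
    have : (((↑) : T.H n → G) ⁻¹' (T.H n : Set G)) = Set.univ := by
      ext y; simp [y.2]
    rw [this]
    exact isClosed_univ
  | succ m hm ih =>
    letI := T.τ (m + 1)
    have hin := (hcl m).1
    have hrange := (hcl m).2
    rw [hin] at ih
    obtain ⟨B', hB', hB'pre⟩ := isClosed_induced_iff.mp ih
    have heq : (((↑) : T.H (m + 1) → G) ⁻¹' (T.H n : Set G)) =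
        B' ∩ Set.range (Subgroup.inclusion (T.mono m)) := by
      ext x
      constructor
      · intro hx
        have hxm : (x : G) ∈ T.H m := T.le_of_le hm hx
        have hy : (⟨(x : G), hxm⟩ : T.H m) ∈ Subgroup.inclusion (T.mono m) ⁻¹' B' := by
          rw [hB'pre]
          exact hx
        have hix : Subgroup.inclusion (T.mono m) ⟨(x : G), hxm⟩ = x := Subtype.ext rfl
        exact ⟨by rw [← hix]; exact hy, ⟨⟨(x : G), hxm⟩, hix⟩⟩
      · rintro ⟨hxB, y, rfl⟩
        have : y ∈ Subgroup.inclusion (T.mono m) ⁻¹' B' := hxB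
        rw [hB'pre] at this
        exact this
    rw [heq]
    exact hB'.inter hrange

lemma key_sep (hcl : T.IsClosedTower) {n m : ℕ} (hnm : n ≤ m) {x : G}
    (hxm : x ∈ T.H m) (hxn : x ∉ T.H n) :
    ∃ Useq : ℕ → Set G, (∀ i, T.NsMem i (Useq i)) ∧
      ∀ w ∈ bsU Useq m, x * w ∉ T.H n := by
  letI := T.τ m
  haveI := T.topGroup m
  have hC : IsClosed (((↑) : T.H m → G) ⁻¹' (T.H n : Set G)) := T.closed_in hcl hnm
  have hΩopen : IsOpen ((((↑) : T.H m → G) ⁻¹' (T.H n : Set G))ᶜ) := hC.isOpen_compl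
  have hmul : Continuous fun h : T.H m => (⟨x, hxm⟩ : T.H m) * h :=
    continuous_const.mul continuous_id
  have hΩ' : ((fun h : T.H m => (⟨x, hxm⟩ : T.H m) * h) ⁻¹'
      ((((↑) : T.H m → G) ⁻¹' (T.H n : Set G))ᶜ)) ∈ 𝓝 (1 : T.H m) := by
    refine (hΩopen.preimage hmul).mem_nhds ?_
    show ¬ ((⟨x, hxm⟩ : T.H m) * 1 : G) ∈ (T.H n : Set G)
    simpa using hxn
  obtain ⟨Z₀, hZ₀, hZ₀pre, _⟩ := T.exists_nsMem_subset m hΩ'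
  obtain ⟨Z, hZ, hZsub, hZsq, hZcube⟩ := hZ₀.exists_cube T
  obtain ⟨Useq, hUseq, hUm, hkey⟩ := T.exists_nsSeq hcl m hZ
  refine ⟨Useq, hUseq, fun w hw hcontra => ?_⟩
  have hwm : w ∈ (T.H m : Set G) := by
    have heq : w = x⁻¹ * (x * w) := by group
    rw [heq]
    exact mul_mem (inv_mem hxm) (T.le_of_le hnm hcontra)
  have h1 : w ∈ Z⁻¹ * Z * Z := hkey ⟨hw, hwm⟩
  rw [hZ.inv_eq T] at h1
  have hwZ₀ : w ∈ Z₀ := hZcube h1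
  have hwm' : w ∈ T.H m := hwm
  have h2 : (⟨w, hwm'⟩ : T.H m) ∈ ((↑) : T.H m → G) ⁻¹' Z₀ := hwZ₀
  have h3 := hZ₀pre h2
  exact h3 (by simpa using hcontra)

/-- The collection of all Bamboo-Shoot sets. -/
def bsSets : Set (Set G) :=
  {s | ∃ U : ℕ → Set G, ∃ k : ℕ, (∀ n, T.NsMem n (U n)) ∧ s = bsU U k}

lemma bsU_mem_bsSets {U : ℕ → Set G} (hU : ∀ n, T.NsMem n (U n)) (k : ℕ) :
    bsU U k ∈ T.bsSets := ⟨U, k, hU, rfl⟩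

/-- The Bamboo-Shoot group filter basis. -/
noncomputable def bsBasis : GroupFilterBasis G := by
  refine groupFilterBasisOfComm T.bsSets
    ⟨bsU (fun n => (T.H n : Set G)) 0, T.bsU_mem_bsSets (fun n => T.nsMem_coe n) 0⟩
    ?_ ?_ ?_ ?_
  · -- intersection
    rintro x y ⟨U, k, hU, rfl⟩ ⟨V, k', hV, rfl⟩
    refine ⟨bsU (fun n => U n ∩ V n) (max k k'),
      T.bsU_mem_bsSets (fun n => (hU n).inter T (hV n)) _, ?_⟩
    have h1i : ∀ i, (1 : G) ∈ U i ∩ V i := fun i => ⟨(hU i).one_mem T, (hV i).one_mem T⟩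
    refine Set.subset_inter ?_ ?_
    · exact ((bsU_mono (fun i => Set.inter_subset_left) _).trans
        (bsU_anti (fun i => (hU i).one_mem T) (le_max_left k k')))
    · exact ((bsU_mono (fun i => Set.inter_subset_right) _).trans
        (bsU_anti (fun i => (hV i).one_mem T) (le_max_right k k')))
  · -- one
    rintro s ⟨U, k, hU, rfl⟩
    exact one_mem_bsU (fun i => (hU i).one_mem T) k
  · -- mul
    rintro s ⟨U, k, hU, rfl⟩
    have hsq : ∀ n, ∃ Z, T.NsMem n Z ∧ Z ⊆ U n ∧ Z * Z ⊆ U n := fun n => (hU n).exists_sq T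
    choose V hVns hVsub hVsq using hsq
    refine ⟨bsU V k, T.bsU_mem_bsSets hVns k, ?_⟩
    have h1V : ∀ i, (1 : G) ∈ V i := fun i => (hVns i).one_mem T
    have hPP : bsPlus V k * bsPlus V k ⊆ bsPlus U k := by
      refine (bsPlus_mul h1V h1V k).trans ?_
      exact Set.iUnion_subset fun j => (bsProd_mono_s10 (fun i => hVsq i) k j).trans
        (subset_bsPlus_self k)
    rintro w ⟨y, ⟨a', ha', b, hb, rfl⟩, z, ⟨c', hc', d, hd, rfl⟩, rfl⟩
    have ha : a'⁻¹ ∈ bsPlus V k := Set.mem_inv.mp ha'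
    have hc : c'⁻¹ ∈ bsPlus V k := Set.mem_inv.mp hc'
    show a' * b * (c' * d) ∈ bsU U k
    have heq : a' * b * (c' * d) = (a'⁻¹ * c'⁻¹)⁻¹ * (b * d) := by
      rw [mul_mul_mul_comm, mul_inv, inv_inv, inv_inv]
    rw [heq]
    exact Set.mul_mem_mul (Set.inv_mem_inv.mpr (hPP (Set.mul_mem_mul ha hc)))
      (hPP (Set.mul_mem_mul hb hd))
  · -- inv
    rintro s ⟨U, k, hU, rfl⟩
    refine ⟨bsU U k, T.bsU_mem_bsSets hU k, fun x hx => ?_⟩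
    show x⁻¹ ∈ bsU U k
    have : (bsU U k)⁻¹ = bsU U k := by
      rw [bsU, mul_inv_rev, inv_inv, mul_comm]
    rw [← this]
    exact Set.inv_mem_inv.mpr hx

lemma bsU_mem_nhds (τgl : TopologicalSpace G) (hglim : T.IsGLim τgl)
    {U : ℕ → Set G} (hU : ∀ n, T.NsMem n (U n)) (k : ℕ) :
    bsU U k ∈ @nhds G τgl 1 := by
  letI tBS := T.bsBasis.topology
  haveI htg : @IsTopologicalGroup G tBS _ := T.bsBasis.isTopologicalGroup
  have hcont : ∀ n, Continuous[T.τ n, tBS] ((↑) : T.H n → G) := by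
    intro n
    letI := T.τ n
    haveI := T.topGroup n
    have : Continuous ((T.H n).subtype) := by
      apply continuous_of_continuousAt_one ((T.H n).subtype)
      rw [ContinuousAt, map_one, (T.bsBasis.nhds_one_hasBasis).tendsto_right_iff]
      rintro s ⟨V, k', hV, rfl⟩
      have h1V : ∀ i, (1 : G) ∈ V i := fun i => (hV i).one_mem T
      have hM : V (max n k') ⊆ bsU V k' :=
        (subset_bsPlus h1V (le_max_right n k')).trans (subset_bsU h1V k')
      have hopen : IsOpen (((↑) : T.H n → G) ⁻¹' (V (max n k'))) :=
        (hV (max n k')).isOpen_pre_of_le T (le_max_left n k')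
      have hmem : ((↑) : T.H n → G) ⁻¹' (V (max n k')) ∈ 𝓝 (1 : T.H n) :=
        hopen.mem_nhds (by simpa using h1V (max n k'))
      filter_upwards [hmem] with x hx
      exact hM hx
    exact this
  have compat : T.IsCompatGroupTopology tBS := ⟨htg, hcont⟩
  have hmem1 : ∃ O, O ⊆ bsU U k ∧ IsOpen[tBS] O ∧ (1 : G) ∈ O := by
    obtain ⟨O, h1, h2, h3⟩ := mem_nhds_iff.mp (T.bsBasis.mem_nhds_one (T.bsU_mem_bsSets hU k))
    exact ⟨O, h1, h2, h3⟩
  obtain ⟨O, hOsub, hOopen, hO1⟩ := hmem1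
  letI := τgl
  exact mem_nhds_iff.mpr ⟨O, hOsub, hglim.2 tBS compat O hOopen, hO1⟩

lemma exists_bsU_subset (τgl : TopologicalSpace G) (hglim : T.IsGLim τgl)
    {V : Set G} (hV : V ∈ @nhds G τgl 1) (k : ℕ) :
    ∃ U : ℕ → Set G, (∀ n, T.NsMem n (U n)) ∧ bsU U k ⊆ V := by
  letI := τgl
  haveI : IsTopologicalGroup G := hglim.1.1
  have shrink : ∀ W : Set G, W ∈ 𝓝 (1 : G) →
      ∃ W' : Set G, W' ∈ 𝓝 (1 : G) ∧ W'⁻¹ = W' ∧ W' * W' ⊆ W := by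
    intro W hW
    obtain ⟨V₁, hV₁, hsp⟩ := exists_nhds_one_split hW
    refine ⟨V₁ ∩ V₁⁻¹, Filter.inter_mem hV₁ (inv_mem_nhds_one G hV₁), ?_, ?_⟩
    · rw [Set.inter_inv, inv_inv, Set.inter_comm]
    · rintro x ⟨a, ha, b, hb, rfl⟩
      exact hsp a ha.1 b hb.1
  choose Fs hFmem hFsymm hFmul using shrink
  let g : ℕ → {S : Set G // S ∈ 𝓝 (1 : G)} := fun j =>
    Nat.rec ⟨Fs V hV, hFmem V hV⟩ (fun _ p => ⟨Fs p.1 p.2, hFmem p.1 p.2⟩) j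
  have hWmem : ∀ j, (g j).1 ∈ 𝓝 (1 : G) := fun j => (g j).2
  have hW1 : ∀ j, (1 : G) ∈ (g j).1 := fun j => mem_of_mem_nhds (hWmem j)
  have hWsymm : ∀ j, ((g j).1)⁻¹ = (g j).1 := fun j =>
    Nat.rec (hFsymm V hV) (fun j _ => hFsymm (g j).1 (g j).2) j
  have hWmul : ∀ j, (g (j + 1)).1 * (g (j + 1)).1 ⊆ (g j).1 := fun j =>
    hFmul (g j).1 (g j).2
  have hW0 : (g 0).1 * (g 0).1 ⊆ V := hFmul V hV
  have hWdown : ∀ j, (g (j + 1)).1 ⊆ (g j).1 := by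
    intro j x hx
    have := hWmul j (Set.mul_mem_mul hx (hW1 (j + 1)))
    rwa [mul_one] at this
  have hUex : ∀ i, ∃ Z, T.NsMem i Z ∧ Z ⊆ (g (i + 2)).1 := by
    intro i
    letI := T.τ i
    have hconti : Continuous[T.τ i, τgl] ((↑) : T.H i → G) := hglim.1.2 i
    have h1 : ((↑) : T.H i → G) (1 : T.H i) = (1 : G) := rfl
    have hnh : ((↑) : T.H i → G) ⁻¹' (g (i + 2)).1 ∈ @nhds _ (T.τ i) (1 : T.H i) := by
      refine ContinuousAt.preimage_mem_nhds (hconti.continuousAt) ?_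
      rw [h1]
      exact hWmem (i + 2)
    obtain ⟨Z, hZ, _, hZim⟩ := T.exists_nsMem_subset i hnh
    exact ⟨Z, hZ, hZim.trans (Set.image_preimage_subset _ _)⟩
  choose U hUns hUsub using hUex
  have key : ∀ j, ∀ k', bsProd U k' j ⊆ (g (k' + 1)).1 := by
    intro j
    induction j with
    | zero => exact fun k' => (hUsub k').trans (hWdown (k' + 1))
    | succ j ih =>
      intro k'
      rw [bsProd_cons]
      exact (Set.mul_subset_mul (hUsub k') (ih (k' + 1))).trans (hWmul (k' + 1))
  have hplus : bsPlus U k ⊆ (g (k + 1)).1 := Set.iUnion_subset fun j => key j k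
  have hbsu : bsU U k ⊆ (g k).1 := by
    have : bsU U k ⊆ ((g (k + 1)).1)⁻¹ * (g (k + 1)).1 :=
      Set.mul_subset_mul (Set.inv_subset_inv.mpr hplus) hplus
    rw [hWsymm (k + 1)] at this
    exact this.trans (hWmul k)
  have hk0 : ∀ j, (g j).1 ⊆ (g 0).1 := fun j =>
    Nat.rec subset_rfl (fun j ih => (hWdown j).trans ih) j
  have hV0 : (g 0).1 ⊆ V := by
    intro x hx
    have := hW0 (Set.mul_mem_mul hx (hW1 0))
    rwa [mul_one] at this
  exact ⟨U, hUns, hbsu.trans ((hk0 k).trans hV0)⟩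

lemma nhds_comap_eq (hcl : T.IsClosedTower) (τgl : TopologicalSpace G)
    (hglim : T.IsGLim τgl) (n : ℕ) :
    @nhds _ (T.τ n) 1 = Filter.comap ((↑) : T.H n → G) (@nhds G τgl 1) := by
  apply le_antisymm
  · letI := T.τ n
    have hconti : Continuous[T.τ n, τgl] ((↑) : T.H n → G) := hglim.1.2 n
    have ht : Filter.Tendsto ((↑) : T.H n → G) (𝓝 1) (@nhds G τgl 1) := by
      have := hconti.continuousAt (x := (1 : T.H n))
      rwa [ContinuousAt] at this
    exact Filter.map_le_iff_le_comap.mp ht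
  · intro Vset hVset
    obtain ⟨Useq, hUns, hkey⟩ := T.key_embed hcl n hVset
    exact Filter.mem_comap.mpr
      ⟨bsU Useq n, T.bsU_mem_nhds τgl hglim hUns n, fun h hh => hkey h hh⟩

lemma induced_eq (hcl : T.IsClosedTower) (τgl : TopologicalSpace G)
    (hglim : T.IsGLim τgl) (n : ℕ) :
    T.τ n = τgl.induced ((↑) : T.H n → G) := by
  letI := τgl
  haveI := hglim.1.1
  have tg' : @IsTopologicalGroup (T.H n) (τgl.induced ((↑) : T.H n → G)) _ := by
    exact (inferInstance : IsTopologicalGroup (T.H n))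
  refine IsTopologicalGroup.ext (T.topGroup n) tg' ?_
  rw [@nhds_induced G (T.H n) τgl ((↑) : T.H n → G) 1]
  exact T.nhds_comap_eq hcl τgl hglim n

lemma closed_H (hcl : T.IsClosedTower) (τgl : TopologicalSpace G)
    (hglim : T.IsGLim τgl) (n : ℕ) :
    IsClosed[τgl] ((T.H n : Set G)) := by
  letI := τgl
  haveI : IsTopologicalGroup G := hglim.1.1
  rw [← isOpen_compl_iff, isOpen_iff_mem_nhds]
  intro x hx
  have hxn : x ∉ T.H n := hx
  obtain ⟨m₀, hm₀⟩ := T.union x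
  obtain ⟨Useq, hUns, hkey⟩ := T.key_sep hcl (le_max_left n m₀)
    (T.le_of_le (le_max_right n m₀) hm₀) hxn
  have hb := T.bsU_mem_nhds τgl hglim hUns (max n m₀)
  rw [← map_mul_left_nhds_one x, Filter.mem_map]
  exact Filter.mem_of_superset hb (fun w hw => hkey w hw)

lemma nhds_comap_eq_at (hcl : T.IsClosedTower) (τgl : TopologicalSpace G)
    (hglim : T.IsGLim τgl) (n : ℕ) (x : T.H n) :
    @nhds _ (T.τ n) x = Filter.comap ((↑) : T.H n → G) (@nhds G τgl (x : G)) := by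
  rw [T.induced_eq hcl τgl hglim n]
  exact @nhds_induced G (T.H n) τgl ((↑) : T.H n → G) x

lemma bsU_split (N : ℕ) {D V : ℕ → Set G}
    (hD1 : ∀ i, (1 : G) ∈ D i) (hDH : ∀ i, D i ⊆ (T.H i : Set G))
    (hDV : ∀ i, N ≤ i → D i ⊆ V i) (hV1 : ∀ i, (1 : G) ∈ V i) :
    bsU D 0 ⊆ (T.H N : Set G) * bsU V N := by
  intro x hx
  have hx' := bsU_subset_bsPlus_invmul hD1 0 hx
  obtain ⟨j, hj⟩ := Set.mem_iUnion.mp hx'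
  have hEH : ∀ i, (D i)⁻¹ * D i ⊆ (T.H i : Set G) := by
    rintro i z ⟨u, hu, v, hv, rfl⟩
    have h1 : u⁻¹ ∈ T.H i := hDH i (Set.mem_inv.mp hu)
    exact mul_mem (by simpa using inv_mem h1) (hDH i hv)
  have hEV : ∀ i, N ≤ i → (D i)⁻¹ * D i ⊆ (V i)⁻¹ * V i := fun i hi =>
    Set.mul_subset_mul (Set.inv_subset_inv.mpr (hDV i hi)) (hDV i hi)
  rcases Nat.lt_or_ge j N with hjN | hjN
  · have hxH : x ∈ (T.H N : Set G) :=
      bsProd_subset_subgroup 0 j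
        (fun i _ h2 => (hEH i).trans (T.coe_subset_of_le (by omega))) hj
    exact ⟨x, hxH, 1, one_mem_bsU hV1 N, mul_one x⟩
  · rcases Nat.eq_zero_or_pos N with hN0 | hNpos
    · subst hN0
      refine ⟨1, one_mem _, x, ?_, one_mul x⟩
      have hsub : bsProd (fun i => (D i)⁻¹ * D i) 0 j ⊆
          bsProd (fun i => (V i)⁻¹ * V i) 0 j :=
        bsProd_mono_s10 (fun i => hEV i (Nat.zero_le i)) 0 j
      exact bsPlus_invmul_subset_bsU 0 (subset_bsPlus_self 0 (hsub hj))
    · obtain ⟨a, rfl⟩ : ∃ a, N = a + 1 := ⟨N - 1, by omega⟩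
      have hjeq : a + 1 + (j - (a + 1)) = j := by omega
      rw [← hjeq] at hj
      rw [bsProd_append] at hj
      obtain ⟨p, hp, q, hq, rfl⟩ := hj
      refine ⟨p, ?_, q, ?_, rfl⟩
      · exact bsProd_subset_subgroup 0 a
          (fun i _ h2 => (hEH i).trans (T.coe_subset_of_le (by omega))) hp
      · have h01 : (0 + a + 1) = a + 1 := by omega
        rw [h01] at hq
        have hq' : q ∈ bsProd (fun i => (V i)⁻¹ * V i) (a + 1) (j - (a + 1)) :=
          bsProd_mono'' (fun i hi => hEV i hi) (a + 1) le_rfl (j - (a + 1)) hq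
        exact bsPlus_invmul_subset_bsU (a + 1) (subset_bsPlus_self (a + 1) hq')

end GroupTower


/-- For a closed tower of abelian Hausdorff topological groups, the group
`glim G_n` (the union with the finest group topology making all inclusions continuous)
is complete with respect to its canonical group uniformity if and only if every `G_n`
is complete. -/
theorem statement_10 {G : Type*} [CommGroup G] (T : GroupTower G)
    (hclosed : T.IsClosedTower)
    (hT2 : ∀ n, @T2Space (T.H n) (T.τ n))
    (τ : TopologicalSpace G) (hglim : T.IsGLim τ) :
    @CompleteSpace G (@IsTopologicalGroup.rightUniformSpace G _ τ hglim.1.1) ↔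
      ∀ n, @CompleteSpace (T.H n)
        (@IsTopologicalGroup.rightUniformSpace (T.H n) _ (T.τ n) (T.topGroup n)) := by
  constructor
  · -- glim complete → each G_n complete
    intro hcomp n
    haveI := T.topGroup n
    letI : UniformSpace (T.H n) :=
      @IsTopologicalGroup.rightUniformSpace (T.H n) _ (T.τ n) (T.topGroup n)
    refine ⟨fun {f} hf => ?_⟩
    have hfne : f.NeBot := hf.1
    -- the pushforward filter is Cauchy in G
    have hFle : (Filter.map ((↑) : T.H n → G) f) ×ˢ (Filter.map ((↑) : T.H n → G) f) ≤
        Filter.comap (fun p : G × G => p.2 / p.1) (@nhds G τ 1) := by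
      rw [Filter.prod_map_map_eq, Filter.map_le_iff_le_comap, Filter.comap_comap]
      have hcomp_eq : ((fun p : G × G => p.2 / p.1) ∘
          (fun p : T.H n × T.H n => (((p.1 : G)), ((p.2 : G))))) =
          (((↑) : T.H n → G) ∘ fun p : T.H n × T.H n => p.2 / p.1) := by
        funext p
        simp [Function.comp]
      rw [hcomp_eq, ← Filter.comap_comap]
      have h2 : f ×ˢ f ≤
          Filter.comap (fun p : T.H n × T.H n => p.2 / p.1) (@nhds _ (T.τ n) 1) := by
        have h := hf.2; simp only [div_eq_mul_inv]; exact h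
      rw [T.nhds_comap_eq hclosed τ hglim n] at h2
      exact h2
    have hFc : @Cauchy G (@IsTopologicalGroup.rightUniformSpace G _ τ hglim.1.1)
        (Filter.map ((↑) : T.H n → G) f) :=
        ⟨hfne.map _, by simp only [div_eq_mul_inv] at hFle; exact hFle⟩
    obtain ⟨x, hx⟩ := hcomp.complete hFc
    have hx' : Filter.map ((↑) : T.H n → G) f ≤ @nhds G τ x := hx
    -- x belongs to the closed subgroup H n
    have hxH : x ∈ (T.H n : Set G) := by
      letI := τ
      have hcl' : IsClosed (T.H n : Set G) := T.closed_H hclosed τ hglim n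
      have hmem : (T.H n : Set G) ∈ Filter.map ((↑) : T.H n → G) f := by
        rw [Filter.mem_map]
        exact Filter.univ_mem' (fun y => y.2)
      have h1 : Filter.map ((↑) : T.H n → G) f ≤ 𝓝 x ⊓ Filter.principal (T.H n : Set G) :=
        le_inf hx' (Filter.le_principal_iff.mpr hmem)
      have hcp : ClusterPt x (Filter.principal (T.H n : Set G)) :=
        Filter.NeBot.mono (hfne.map _) h1
      have := mem_closure_iff_clusterPt.mpr hcp
      rwa [hcl'.closure_eq] at this
    refine ⟨⟨x, hxH⟩, ?_⟩
    show f ≤ @nhds _ (T.τ n) (⟨x, hxH⟩ : T.H n)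
    rw [T.nhds_comap_eq_at hclosed τ hglim n ⟨x, hxH⟩]
    exact Filter.map_le_iff_le_comap.mp hx'
  · -- each G_n complete → glim complete
    intro hc
    letI : UniformSpace G := @IsTopologicalGroup.rightUniformSpace G _ τ hglim.1.1
    refine ⟨fun {F} hF => ?_⟩
    letI := τ
    haveI htg : IsTopologicalGroup G := hglim.1.1
    have hFne : F.NeBot := hF.1
    -- small sets of the Cauchy filter
    have hsmall : ∀ V, V ∈ @nhds G τ 1 → ∃ A ∈ F, ∀ a ∈ A, ∀ b ∈ A, b / a ∈ V := by
      intro V hV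
      have h2 : F ×ˢ F ≤ Filter.comap (fun p : G × G => p.2 / p.1) (@nhds G τ 1) := by
        have h := hF.2; simp only [div_eq_mul_inv]; exact h
      have h3 : (fun p : G × G => p.2 / p.1) ⁻¹' V ∈ F ×ˢ F :=
        h2 (Filter.preimage_mem_comap hV)
      obtain ⟨A₁, hA₁, A₂, hA₂, hsub⟩ := Filter.mem_prod_iff.mp h3
      refine ⟨A₁ ∩ A₂, Filter.inter_mem hA₁ hA₂, fun a ha b hb => ?_⟩
      exact hsub (Set.mk_mem_prod ha.1 hb.2)
    -- symmetric shrinking of neighborhoods of 1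
    have shrink : ∀ W : Set G, W ∈ 𝓝 (1 : G) → ∃ W', W' ∈ 𝓝 (1 : G) ∧ W'⁻¹ = W' ∧
        (1 : G) ∈ W' ∧ ∀ a ∈ W', ∀ b ∈ W', a * b ∈ W := by
      intro W hW
      obtain ⟨V₁, hV₁, hsp⟩ := exists_nhds_one_split hW
      refine ⟨V₁ ∩ V₁⁻¹, Filter.inter_mem hV₁ (inv_mem_nhds_one G hV₁), ?_,
        ⟨mem_of_mem_nhds hV₁, by simpa using mem_of_mem_nhds hV₁⟩, ?_⟩
      · rw [Set.inter_inv, inv_inv, Set.inter_comm]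
      · intro a ha b hb
        exact hsp a ha.1 b hb.1
    have shrink4 : ∀ W : Set G, W ∈ 𝓝 (1 : G) → ∃ W', W' ∈ 𝓝 (1 : G) ∧ W'⁻¹ = W' ∧
        (1 : G) ∈ W' ∧ ∀ a ∈ W', ∀ b ∈ W', ∀ c ∈ W', ∀ d ∈ W', a * b * c * d ∈ W := by
      intro W hW
      obtain ⟨Ws, hWs, _, _, hWsmul⟩ := shrink W hW
      obtain ⟨W₁, h1, h2, h3, h4⟩ := shrink Ws hWs
      refine ⟨W₁, h1, h2, h3, fun a ha b hb c hc d hd => ?_⟩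
      rw [mul_assoc (a * b) c d]
      exact hWsmul _ (h4 a ha b hb) _ (h4 c hc d hd)
    -- STEP 1 : the filter is concentrated near some H N
    have step1 : ∃ N : ℕ, ∀ V, V ∈ @nhds G τ 1 → ∃ A ∈ F, A ⊆ (T.H N : Set G) * V := by
      by_contra hcon
      push_neg at hcon
      choose Vb hVbmem hVbbad using hcon
      have hXex : ∀ p : ℕ, ∃ X, X ∈ 𝓝 (1 : G) ∧ X⁻¹ = X ∧ (1 : G) ∈ X ∧
          ∀ a ∈ X, ∀ b ∈ X, a * b ∈ Vb p := fun p => shrink _ (hVbmem p)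
      choose X hXmem hXsym hX1 hXmul using hXex
      have hAex : ∀ p, ∃ A ∈ F, A ∩ ((T.H p : Set G) * X p) = ∅ := by
        intro p
        obtain ⟨A, hA, hAdiv⟩ := hsmall (X p) (hXmem p)
        refine ⟨A, hA, ?_⟩
        by_contra hne
        obtain ⟨a, haA, h, hh, x, hx, hhxa⟩ : ∃ a ∈ A, ∃ h ∈ (T.H p : Set G),
            ∃ x ∈ X p, h * x = a := by
          rcases Set.nonempty_iff_ne_empty.mpr hne with ⟨a, haA, hmemp⟩
          rcases hmemp with ⟨h, hh, x, hx, heq⟩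
          exact ⟨a, haA, h, hh, x, hx, heq⟩
        refine hVbbad p A hA ?_
        intro b hb
        refine ⟨h, hh, x * (b / a), hXmul p x hx _ (hAdiv a haA b hb), ?_⟩
        show h * (x * (b / a)) = b
        rw [← mul_assoc, hhxa]
        exact mul_div_cancel a b
      choose Ab hAbF hAbdisj using hAex
      have hUex : ∀ p, ∃ U : ℕ → Set G, (∀ i, T.NsMem i (U i)) ∧ bsU U p ⊆ X p :=
        fun p => T.exists_bsU_subset τ hglim (hXmem p) p
      choose UU hUUns hUUsub using hUex
      set D : ℕ → Set G := fun i =>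
        (T.H i : Set G) ∩ ⋂ p ∈ Finset.range (i + 1), UU p i with hD
      have hDns : ∀ i, T.NsMem i (D i) :=
        fun i => T.nsMem_finsetInter (Finset.range (i + 1)) (fun p => UU p i)
          (fun p _ => hUUns p i)
      have hD1 : ∀ i, (1 : G) ∈ D i := fun i => (hDns i).one_mem T
      have hDH : ∀ i, D i ⊆ (T.H i : Set G) := fun i => (hDns i).subset_H T
      have hDsubU : ∀ p i, p ≤ i → D i ⊆ UU p i := by
        intro p i hpi x hx
        exact Set.mem_iInter₂.mp hx.2 p (Finset.mem_range.mpr (by omega))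
      have hΩ : bsU D 0 ∈ @nhds G τ 1 := T.bsU_mem_nhds τ hglim hDns 0
      obtain ⟨A, hA, hAdiv⟩ := hsmall _ hΩ
      obtain ⟨a, haA⟩ := Filter.nonempty_of_mem hA
      obtain ⟨M, haM⟩ := T.union a
      obtain ⟨c, hcA, hcAb⟩ := Filter.nonempty_of_mem (Filter.inter_mem hA (hAbF M))
      have hsplit : bsU D 0 ⊆ (T.H M : Set G) * bsU (UU M) M :=
        T.bsU_split M hD1 hDH (fun i hMi => hDsubU M i hMi)
          (fun i => (hUUns M i).one_mem T)
      have hca : c / a ∈ bsU D 0 := hAdiv a haA c hcA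
      obtain ⟨h, hh, y, hy, hhy⟩ := hsplit hca
      have hcmem : c ∈ (T.H M : Set G) * X M := by
        refine ⟨a * h, mul_mem haM hh, y, hUUsub M hy, ?_⟩
        have hhy' : h * y = c / a := hhy
        show a * h * y = c
        rw [mul_assoc, hhy']
        exact mul_div_cancel a c
      have : c ∈ (∅ : Set G) := (hAbdisj M) ▸ (⟨hcAb, hcmem⟩ : c ∈ Ab M ∩ _)
      exact this.elim
    obtain ⟨N, hN⟩ := step1
    haveI := T.topGroup N
    -- the "blur" of F and its trace filter on H N
    set 𝒢 : Filter G := Filter.map (fun p : G × G => p.1 * p.2) (F ×ˢ (@nhds G τ 1))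
      with h𝒢
    have hAV : ∀ A : Set G, A ∈ F → ∀ V, V ∈ @nhds G τ 1 → A * V ∈ 𝒢 := by
      intro A hA V hV
      rw [h𝒢, Filter.mem_map]
      refine Filter.mem_of_superset (Filter.prod_mem_prod hA hV) ?_
      rintro ⟨a, v⟩ ⟨ha, hv⟩
      exact Set.mul_mem_mul ha hv
    have htrace : ∀ A : Set G, A ∈ F → ∀ V, V ∈ @nhds G τ 1 → V⁻¹ = V →
        ∃ y : T.H N, ∃ a ∈ A, ∃ v ∈ V, (y : G) = a * v := by
      intro A hA V hV hVsym
      obtain ⟨A', hA', hA'sub⟩ := hN V hV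
      obtain ⟨a, haA, haA'⟩ := Filter.nonempty_of_mem (Filter.inter_mem hA hA')
      obtain ⟨h, hh, v, hv, hhva⟩ := hA'sub haA'
      have hvV : v⁻¹ ∈ V := by rw [← hVsym]; exact Set.inv_mem_inv.mpr hv
      refine ⟨⟨h, hh⟩, a, haA, v⁻¹, hvV, ?_⟩
      have hhva' : h * v = a := hhva
      show h = a * v⁻¹
      rw [← hhva']
      group
    set f : Filter (T.H N) := Filter.comap ((↑) : T.H N → G) 𝒢 with hfdef
    haveI hfne : f.NeBot := by
      rw [hfdef]
      refine Filter.comap_neBot fun S hS => ?_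
      rw [h𝒢, Filter.mem_map] at hS
      obtain ⟨A, hA, V, hV, hsub⟩ := Filter.mem_prod_iff.mp hS
      have hV' : V ∩ V⁻¹ ∈ @nhds G τ 1 :=
        Filter.inter_mem hV (inv_mem_nhds_one G hV)
      have hV'sym : (V ∩ V⁻¹)⁻¹ = V ∩ V⁻¹ := by
        rw [Set.inter_inv, inv_inv, Set.inter_comm]
      obtain ⟨y, a, haA, v, hv, hyav⟩ := htrace A hA _ hV' hV'sym
      refine ⟨y, ?_⟩
      have : (a, v) ∈ (fun p : G × G => p.1 * p.2) ⁻¹' S :=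
        hsub (Set.mk_mem_prod haA hv.1)
      rw [hyav]
      exact this
    -- f is Cauchy
    have h𝒢c : 𝒢 ×ˢ 𝒢 ≤ Filter.comap (fun p : G × G => p.2 / p.1) (@nhds G τ 1) := by
      rw [← Filter.map_le_iff_le_comap, Filter.le_def]
      intro W hW
      rw [Filter.mem_map]
      obtain ⟨W₁, hW₁, hW₁sym, hW₁1, hW₁quad⟩ := shrink4 W hW
      obtain ⟨A, hA, hAdiv⟩ := hsmall W₁ hW₁
      refine Filter.mem_prod_iff.mpr ⟨A * W₁, hAV A hA W₁ hW₁, A * W₁, hAV A hA W₁ hW₁, ?_⟩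
      rintro ⟨y, z⟩ ⟨⟨a₁, ha₁, w₁, hw₁, hy⟩, ⟨a₂, ha₂, w₂, hw₂, hz⟩⟩
      show z / y ∈ W
      have hw₁' : w₁⁻¹ ∈ W₁ := by rw [← hW₁sym]; exact Set.inv_mem_inv.mpr hw₁
      have hy' : a₁ * w₁ = y := hy
      have hz' : a₂ * w₂ = z := hz
      have heq : z / y = (a₂ / a₁) * w₂ * w₁⁻¹ * 1 := by
        rw [← hy', ← hz']
        simp [div_eq_mul_inv, mul_inv, mul_comm, mul_left_comm, mul_assoc]
      rw [heq]
      exact hW₁quad _ (hAdiv a₁ ha₁ a₂ ha₂) _ hw₂ _ hw₁' _ hW₁1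
    have hfc : @Cauchy _ (@IsTopologicalGroup.rightUniformSpace (T.H N) _ (T.τ N)
        (T.topGroup N)) f := by
      refine ⟨hfne, ?_⟩
      show f ×ˢ f ≤ Filter.comap (fun p : T.H N × T.H N => p.2 * p.1⁻¹) (@nhds _ (T.τ N) 1)
      simp only [← div_eq_mul_inv]
      rw [T.nhds_comap_eq hclosed τ hglim N, hfdef, Filter.prod_comap_comap_eq]
      have hcomp_eq : ((fun p : G × G => p.2 / p.1) ∘
          (fun p : T.H N × T.H N => (((p.1 : G)), ((p.2 : G))))) =
          (((↑) : T.H N → G) ∘ fun p : T.H N × T.H N => p.2 / p.1) := by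
        funext p
        simp [Function.comp]
      calc Filter.comap (fun p : T.H N × T.H N => (((p.1 : G)), ((p.2 : G)))) (𝒢 ×ˢ 𝒢)
          ≤ Filter.comap (fun p : T.H N × T.H N => (((p.1 : G)), ((p.2 : G))))
            (Filter.comap (fun p : G × G => p.2 / p.1) (@nhds G τ 1)) :=
            Filter.comap_mono h𝒢c
        _ = Filter.comap (fun p : T.H N × T.H N => p.2 / p.1)
            (Filter.comap ((↑) : T.H N → G) (@nhds G τ 1)) := by
            rw [Filter.comap_comap, Filter.comap_comap, hcomp_eq]
    obtain ⟨x', hx'⟩ := (hc N).complete hfc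
    have hx'' : f ≤ @nhds _ (T.τ N) x' := hx'
    -- F converges to x'
    refine ⟨(x' : G), ?_⟩
    show F ≤ @nhds G τ (x' : G)
    rw [← nhds_translation_mul_inv (x' : G)]
    intro s hs
    rw [Filter.mem_comap] at hs
    obtain ⟨W, hW, hWsub⟩ := hs
    obtain ⟨W₁, hW₁, hW₁sym, hW₁1, hW₁quad⟩ := shrink4 W hW
    obtain ⟨A, hA, hAdiv⟩ := hsmall W₁ hW₁
    have hS𝒢 : A * W₁ ∈ 𝒢 := hAV A hA W₁ hW₁
    have hfS : ((↑) : T.H N → G) ⁻¹' (A * W₁) ∈ f := by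
      rw [hfdef]
      exact Filter.preimage_mem_comap hS𝒢
    have hQ : (fun w => (x' : G) * w) '' W₁ ∈ @nhds G τ (x' : G) := by
      rw [← map_mul_left_nhds_one (x' : G)]
      exact Filter.image_mem_map hW₁
    have hfQ : ((↑) : T.H N → G) ⁻¹' ((fun w => (x' : G) * w) '' W₁) ∈ f := by
      have h1 : ((↑) : T.H N → G) ⁻¹' ((fun w => (x' : G) * w) '' W₁) ∈
          @nhds _ (T.τ N) x' := by
        rw [T.nhds_comap_eq_at hclosed τ hglim N x']
        exact Filter.preimage_mem_comap hQ
      exact hx'' h1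
    obtain ⟨y, hyS, hyQ⟩ := Filter.nonempty_of_mem (Filter.inter_mem hfS hfQ)
    obtain ⟨a₁, ha₁, w₁, hw₁, hyeq⟩ := hyS
    obtain ⟨w₂, hw₂, hyeq2⟩ := hyQ
    refine Filter.mem_of_superset hA fun b hb => hWsub ?_
    show b * (x' : G)⁻¹ ∈ W
    have hw₁' : w₁⁻¹ ∈ W₁ := by rw [← hW₁sym]; exact Set.inv_mem_inv.mpr hw₁
    have hyeq' : a₁ * w₁ = (y : G) := hyeq
    have hyeq2' : (x' : G) * w₂ = (y : G) := hyeq2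
    have hxeq : (x' : G) = a₁ * w₁ * w₂⁻¹ := by
      have h6 : (x' : G) * w₂ = a₁ * w₁ := by rw [hyeq2', hyeq']
      rw [← h6]
      group
    have heqb : b * (x' : G)⁻¹ = (b / a₁) * w₂ * w₁⁻¹ * 1 := by
      rw [hxeq]
      simp [div_eq_mul_inv, mul_inv, mul_comm, mul_left_comm, mul_assoc]
    rw [heqb]
    exact hW₁quad _ (hAdiv a₁ ha₁ b hb) _ hw₂ _ hw₁' _ hW₁1
end

section
/- Let {G_n}_{n∈ω} be a tower of Hausdorff locally compact topological groups. Then the group G := ⋃_{n∈ω} G_n endowed with τ_ind (which equals τ_BS and is a group topology, so G = glim G_n) contains an open subgroup which is a k_ω-space. -/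
open Topology Filter Set Pointwise

namespace St12

variable {G : Type*} [Group G]

theorem H_mono (T : GroupTower G) : Monotone T.H :=
  monotone_nat_of_le_succ T.mono

/-- The preimage of a subset of `G` in the `n`-th group of the tower. -/
def cpre (T : GroupTower G) (n : ℕ) (S : Set G) : Set (T.H n) :=
  ((↑) : T.H n → G) ⁻¹' S

theorem mem_cpre {T : GroupTower G} {n : ℕ} {S : Set G} {y : T.H n} :
    y ∈ cpre T n S ↔ (y : G) ∈ S := Iff.rfl

theorem cpre_mono (T : GroupTower G) (n : ℕ) {S S' : Set G} (h : S ⊆ S') :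
    cpre T n S ⊆ cpre T n S' := fun _ hx => h hx

theorem incl_cont_le (T : GroupTower G) {m n : ℕ} (h : m ≤ n) :
    Continuous[T.τ m, T.τ n] (Subgroup.inclusion (H_mono T h)) := by
  induction n, h using Nat.le_induction with
  | base =>
    have he : (Subgroup.inclusion (H_mono T (le_refl m))) = fun x : T.H m => x := by
      funext x; exact Subtype.ext rfl
    rw [he]; exact @continuous_id _ (T.τ m)
  | succ n hmn ih =>
    have he : (Subgroup.inclusion (H_mono T (Nat.le_succ_of_le hmn)))
        = (Subgroup.inclusion (T.mono n)) ∘ (Subgroup.inclusion (H_mono T hmn)) := by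
      funext x; exact Subtype.ext rfl
    rw [he]
    exact @Continuous.comp _ _ _ (T.τ m) (T.τ n) (T.τ (n+1)) _ _ (T.incl_cont n) ih

theorem cpre_eq_image (T : GroupTower G) {m n : ℕ} (h : m ≤ n) (S : Set G)
    (hs : S ⊆ (T.H m : Set G)) :
    cpre T n S = Subgroup.inclusion (H_mono T h) '' (cpre T m S) := by
  ext y
  constructor
  · intro hy
    exact ⟨⟨(y : G), hs hy⟩, hy, Subtype.ext rfl⟩
  · rintro ⟨x, hx, rfl⟩
    exact hx

/-- A compact symmetric subset of the `n`-th group containing the identity. -/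
def Good (T : GroupTower G) (n : ℕ) (S : Set G) : Prop :=
  S ⊆ (T.H n : Set G) ∧ @IsCompact _ (T.τ n) (cpre T n S) ∧ (1 : G) ∈ S ∧ S⁻¹ = S

theorem good_one (T : GroupTower G) : Good T 0 ({1} : Set G) := by
  refine ⟨?_, ?_, rfl, ?_⟩
  · intro x hx
    rw [Set.mem_singleton_iff] at hx
    subst hx
    exact (T.H 0).one_mem
  · exact @Set.Subsingleton.isCompact _ (T.τ 0) _
      (Set.subsingleton_singleton.preimage Subtype.coe_injective)
  · simp

theorem image_inv_eq (T : GroupTower G) (n : ℕ) (Z : Set (T.H n)) :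
    (((↑) : T.H n → G) '' Z)⁻¹ = ((↑) : T.H n → G) '' Z⁻¹ := by
  ext x
  simp only [Set.mem_inv, Set.mem_image]
  constructor
  · rintro ⟨y, hy, h⟩
    refine ⟨y⁻¹, by simpa using hy, ?_⟩
    have : ((y⁻¹ : T.H n) : G) = (y : G)⁻¹ := rfl
    rw [this, h, inv_inv]
  · rintro ⟨y, hy, rfl⟩
    refine ⟨y⁻¹, by simpa using hy, ?_⟩
    rfl

theorem step (T : GroupTower G) (hLC : ∀ n, @LocallyCompactSpace (T.H n) (T.τ n))
    (n : ℕ) (S : Set G) (hS : Good T n S) :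
    ∃ S' : Set G, Good T (n + 1) S' ∧
      S * S ⊆ ((↑) : T.H (n + 1) → G) '' (@interior _ (T.τ (n + 1)) (cpre T (n + 1) S')) := by
  letI := T.τ (n + 1)
  haveI := T.topGroup (n + 1)
  haveI := hLC (n + 1)
  obtain ⟨hsub, hcomp, hone, hinv⟩ := hS
  set A : Set (T.H (n + 1)) := (Subgroup.inclusion (T.mono n)) '' (cpre T n S) with hA
  have hAc : IsCompact A := @IsCompact.image _ _ (T.τ n) _ _ _ hcomp (T.incl_cont n)
  have hBc : IsCompact (A * A) := hAc.mul hAc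
  obtain ⟨L, hLc, hBL, -⟩ := exists_compact_between hBc isOpen_univ (Set.subset_univ _)
  set L' : Set (T.H (n + 1)) := L ∪ L⁻¹ with hL'
  have hpre : cpre T (n + 1) (((↑) : T.H (n + 1) → G) '' L') = L' :=
    Subtype.coe_injective.preimage_image _
  have honeA : (1 : T.H (n + 1)) ∈ A := ⟨(1 : T.H n), hone, map_one _⟩
  have hintL' : A * A ⊆ interior L' :=
    hBL.trans (interior_mono Set.subset_union_left)
  refine ⟨((↑) : T.H (n + 1) → G) '' L', ⟨?_, ?_, ?_, ?_⟩, ?_⟩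
  · rintro x ⟨y, _, rfl⟩
    exact y.2
  · rw [hpre]
    exact hLc.union hLc.inv
  · have h1 : (1 : T.H (n + 1)) ∈ interior L' := by
      simpa using hintL' (Set.mul_mem_mul honeA honeA)
    exact ⟨1, interior_subset h1, rfl⟩
  · rw [image_inv_eq]
    rw [hL', Set.union_inv, inv_inv, Set.union_comm]
  · rw [hpre]
    rintro z ⟨x, hx, y, hy, rfl⟩
    refine ⟨(⟨x, T.mono n (hsub hx)⟩ : T.H (n + 1)) * ⟨y, T.mono n (hsub hy)⟩, ?_, rfl⟩
    exact hintL' (Set.mul_mem_mul ⟨⟨x, hsub hx⟩, hx, Subtype.ext rfl⟩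
      ⟨⟨y, hsub hy⟩, hy, Subtype.ext rfl⟩)

variable (T : GroupTower G) (hLC : ∀ n, @LocallyCompactSpace (T.H n) (T.τ n))

noncomputable def seqS : (n : ℕ) → {S : Set G // Good T n S}
  | 0 => ⟨({1} : Set G), good_one T⟩
  | n + 1 => ⟨(step T hLC n (seqS n).1 (seqS n).2).choose,
      (step T hLC n (seqS n).1 (seqS n).2).choose_spec.1⟩

/-- The increasing sequence of compact sets generating the open subgroup. -/
noncomputable def SS (n : ℕ) : Set G := (seqS T hLC n).1

theorem good_SS (n : ℕ) : Good T n (SS T hLC n) := (seqS T hLC n).2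

theorem step_SS (n : ℕ) : SS T hLC n * SS T hLC n ⊆
    ((↑) : T.H (n + 1) → G) '' (@interior _ (T.τ (n + 1)) (cpre T (n + 1) (SS T hLC (n + 1)))) :=
  (step T hLC n (seqS T hLC n).1 (seqS T hLC n).2).choose_spec.2

theorem SS_sub_int (n : ℕ) : SS T hLC n ⊆
    ((↑) : T.H (n + 1) → G) '' (@interior _ (T.τ (n + 1)) (cpre T (n + 1) (SS T hLC (n + 1)))) := by
  intro x hx
  have h1 : (1 : G) ∈ SS T hLC n := (good_SS T hLC n).2.2.1
  have := step_SS T hLC n (Set.mul_mem_mul hx h1)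
  rwa [mul_one] at this

theorem SS_succ (n : ℕ) : SS T hLC n ⊆ SS T hLC (n + 1) := by
  intro x hx
  obtain ⟨y, hy, rfl⟩ := SS_sub_int T hLC n hx
  exact @interior_subset (T.H (n + 1)) (T.τ (n + 1)) (cpre T (n + 1) (SS T hLC (n + 1))) _ hy

theorem SS_le {m n : ℕ} (h : m ≤ n) : SS T hLC m ⊆ SS T hLC n := by
  induction n, h using Nat.le_induction with
  | base => exact subset_rfl
  | succ n hmn ih => exact ih.trans (SS_succ T hLC n)

theorem SS_mul (n : ℕ) : SS T hLC n * SS T hLC n ⊆ SS T hLC (n + 1) := by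
  intro z hz
  obtain ⟨y, hy, rfl⟩ := step_SS T hLC n hz
  exact @interior_subset (T.H (n + 1)) (T.τ (n + 1)) (cpre T (n + 1) (SS T hLC (n + 1))) _ hy

/-- The candidate open subgroup. -/
noncomputable def Hsub : Subgroup G where
  carrier := ⋃ n, SS T hLC n
  one_mem' := Set.mem_iUnion.mpr ⟨0, (good_SS T hLC 0).2.2.1⟩
  mul_mem' := by
    rintro a b ha hb
    obtain ⟨na, hna⟩ := Set.mem_iUnion.mp ha
    obtain ⟨nb, hnb⟩ := Set.mem_iUnion.mp hb
    refine Set.mem_iUnion.mpr ⟨max na nb + 1, SS_mul T hLC _ (Set.mul_mem_mul ?_ ?_)⟩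
    · exact SS_le T hLC (le_max_left na nb) hna
    · exact SS_le T hLC (le_max_right na nb) hnb
  inv_mem' := by
    rintro a ha
    obtain ⟨n, hn⟩ := Set.mem_iUnion.mp ha
    refine Set.mem_iUnion.mpr ⟨n, ?_⟩
    have hinv := (good_SS T hLC n).2.2.2
    rw [← hinv]
    simpa using hn

theorem coe_cont (τind : TopologicalSpace G) (hind : T.IsIndTop τind) (n : ℕ) :
    Continuous[T.τ n, τind] ((↑) : T.H n → G) := by
  rw [continuous_def]
  intro A hA
  exact (hind A).mp hA n

theorem SS_cpt_ind (τind : TopologicalSpace G) (hind : T.IsIndTop τind) (n : ℕ) :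
    @IsCompact _ τind (SS T hLC n) := by
  have h := @IsCompact.image _ _ (T.τ n) τind (((↑) : T.H n → G) ⁻¹' SS T hLC n) _
    (good_SS T hLC n).2.1 (coe_cont T τind hind n)
  rwa [Set.image_preimage_eq_of_subset (fun x hx => ⟨⟨x, (good_SS T hLC n).1 hx⟩, rfl⟩)] at h

/-- The key openness lemma: a set whose traces on the `SS n` are compact has
`τind`-open complement inside `⋃ n, SS n`. -/
theorem key (hT2 : ∀ n, @T2Space (T.H n) (T.τ n))
    (τind : TopologicalSpace G) (hind : T.IsIndTop τind) (A' : Set G)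
    (hA : ∀ n, @IsCompact _ (T.τ n) (cpre T n (A' ∩ SS T hLC n))) :
    IsOpen[τind] ((⋃ n, SS T hLC n) \ A') := by
  -- the single fattening step
  have fat : ∀ k (D : Set G), D ⊆ SS T hLC k → @IsCompact _ (T.τ k) (cpre T k D) →
      D ∩ A' = ∅ → ∃ D' : Set G,
      (D' ⊆ SS T hLC (k + 1) ∧ @IsCompact _ (T.τ (k + 1)) (cpre T (k + 1) D') ∧
        D' ∩ A' = ∅) ∧
      D ⊆ ((↑) : T.H (k + 1) → G) '' (@interior _ (T.τ (k + 1)) (cpre T (k + 1) D')) := by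
    intro k D hD1 hD2 hD3
    letI := T.τ (k + 1)
    haveI := hT2 (k + 1)
    haveI := hLC (k + 1)
    set Dh : Set (T.H (k + 1)) := (Subgroup.inclusion (T.mono k)) '' (cpre T k D) with hDh
    have hDhc : IsCompact Dh := @IsCompact.image _ _ (T.τ k) _ _ _ hD2 (T.incl_cont k)
    set U : Set (T.H (k + 1)) :=
      interior (cpre T (k + 1) (SS T hLC (k + 1))) \ cpre T (k + 1) (A' ∩ SS T hLC (k + 1))
      with hU
    have hUopen : IsOpen U := isOpen_interior.sdiff (hA (k + 1)).isClosed
    have hDhU : Dh ⊆ U := by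
      rintro d ⟨y, hy, rfl⟩
      constructor
      · obtain ⟨z, hz, hzy⟩ := SS_sub_int T hLC k (hD1 hy)
        have : Subgroup.inclusion (T.mono k) y = z := Subtype.ext (by
          rw [hzy]; rfl)
        rw [this]; exact hz
      · intro hmem
        have : (y : G) ∈ D ∩ A' := ⟨hy, hmem.1⟩
        rw [hD3] at this
        exact this.elim
    obtain ⟨L, hLc, hDL, hLU⟩ := exists_compact_between hDhc hUopen hDhU
    have hpre : cpre T (k + 1) (((↑) : T.H (k + 1) → G) '' L) = L :=
      Subtype.coe_injective.preimage_image _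
    refine ⟨((↑) : T.H (k + 1) → G) '' L, ⟨?_, ?_, ?_⟩, ?_⟩
    · rintro x ⟨y, hy, rfl⟩
      have h1 : y ∈ cpre T (k + 1) (SS T hLC (k + 1)) := interior_subset (hLU hy).1
      exact h1
    · rwa [hpre]
    · ext x
      simp only [Set.mem_inter_iff, Set.mem_image, Set.mem_empty_iff_false, iff_false]
      rintro ⟨⟨y, hy, rfl⟩, hxA⟩
      have h1 : y ∈ cpre T (k + 1) (SS T hLC (k + 1)) := interior_subset (hLU hy).1
      exact (hLU hy).2 ⟨hxA, h1⟩
    · rw [hpre]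
      intro d hd
      refine ⟨⟨d, T.mono k ((good_SS T hLC k).1 (hD1 hd))⟩, ?_, rfl⟩
      have : Subgroup.inclusion (T.mono k) (⟨d, (good_SS T hLC k).1 (hD1 hd)⟩ : T.H k) ∈
          interior L := hDL ⟨_, hd, rfl⟩
      exact this
  -- main argument
  refine (hind _).mpr ?_
  intro m
  letI := T.τ m
  rw [isOpen_iff_forall_mem_open]
  intro xh hxh
  rw [Set.mem_preimage] at hxh
  obtain ⟨hxU, hxA⟩ := hxh
  obtain ⟨n, hn⟩ := Set.mem_iUnion.mp hxU
  set N := max n m with hN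
  have hxN : (xh : G) ∈ SS T hLC N := SS_le T hLC (le_max_left n m) hn
  -- invariant for the fattening recursion
  set P : ℕ → Set G → Prop := fun k D =>
    D ⊆ SS T hLC k ∧ @IsCompact _ (T.τ k) (cpre T k D) ∧ D ∩ A' = ∅ with hP
  have hstep : ∀ k (D : Set G), ∃ D' : Set G, P k D → (P (k + 1) D' ∧
      D ⊆ ((↑) : T.H (k + 1) → G) '' (@interior _ (T.τ (k + 1)) (cpre T (k + 1) D'))) := by
    intro k D
    by_cases h : P k D
    · obtain ⟨D', h1, h2⟩ := fat k D h.1 h.2.1 h.2.2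
      exact ⟨D', fun _ => ⟨h1, h2⟩⟩
    · exact ⟨∅, fun h' => absurd h' h⟩
  choose F hF using hstep
  set D : ℕ → Set G := fun j => Nat.rec ({(xh : G)} : Set G) (fun j Dj => F (N + 1 + j) Dj) j
    with hD
  have hD0 : D 0 = {(xh : G)} := rfl
  have hInv : ∀ j, P (N + 1 + j) (D j) := by
    intro j
    induction j with
    | zero =>
      refine ⟨?_, ?_, ?_⟩
      · intro a ha
        have ha' : a ∈ ({(xh : G)} : Set G) := ha
        rw [Set.mem_singleton_iff] at ha'
        subst ha'
        exact SS_succ T hLC N hxN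
      · exact @Set.Subsingleton.isCompact _ (T.τ (N + 1)) _
          (Set.subsingleton_singleton.preimage Subtype.coe_injective)
      · exact Set.singleton_inter_eq_empty.mpr hxA
    | succ j ih => exact (hF (N + 1 + j) (D j) ih).1
  have hfat : ∀ j, D j ⊆ ((↑) : T.H (N + 1 + j + 1) → G) ''
      (@interior _ (T.τ (N + 1 + j + 1)) (cpre T (N + 1 + j + 1) (D (j + 1)))) :=
    fun j => (hF (N + 1 + j) (D j) (hInv j)).2
  have hm : ∀ j : ℕ, m ≤ N + 1 + j + 1 :=
    fun j => le_trans (le_max_right n m) (by omega)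
  refine ⟨⋃ j : ℕ, (Subgroup.inclusion (H_mono T (hm j))) ⁻¹'
      (@interior _ (T.τ (N + 1 + j + 1)) (cpre T (N + 1 + j + 1) (D (j + 1)))), ?_, ?_, ?_⟩
  · intro w hw
    obtain ⟨j, hj⟩ := Set.mem_iUnion.mp hw
    rw [Set.mem_preimage] at hj
    have hwD : (w : G) ∈ D (j + 1) := by
      have := @interior_subset (T.H (N + 1 + j + 1)) (T.τ (N + 1 + j + 1))
        (cpre T (N + 1 + j + 1) (D (j + 1))) _ hj
      exact this
    rw [Set.mem_preimage]
    constructor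
    · exact Set.mem_iUnion.mpr ⟨N + 1 + j + 1, (hInv (j + 1)).1 hwD⟩
    · intro hwA
      have h0 := (hInv (j + 1)).2.2
      rw [Set.eq_empty_iff_forall_notMem] at h0
      exact h0 _ ⟨hwD, hwA⟩
  · refine isOpen_iUnion fun j => ?_
    letI := T.τ (N + 1 + j + 1)
    exact (incl_cont_le T (hm j)).isOpen_preimage _ isOpen_interior
  · refine Set.mem_iUnion.mpr ⟨0, ?_⟩
    rw [Set.mem_preimage]
    obtain ⟨y, hy, hyx⟩ := hfat 0 (by rw [hD0]; rfl)
    have : Subgroup.inclusion (H_mono T (hm 0)) xh = y := Subtype.ext (by rw [hyx]; rfl)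
    rw [this]
    exact hy

theorem closed_traces (j : ℕ) (C : Set G) (hCS : C ⊆ SS T hLC j)
    (hC : IsClosed[T.τ j] (cpre T j C)) (m : ℕ) :
    @IsCompact _ (T.τ m) (cpre T m (C ∩ SS T hLC m)) := by
  rcases le_or_gt m j with h | h
  · letI := T.τ m
    have h1 : cpre T m (C ∩ SS T hLC m) =
        (Subgroup.inclusion (H_mono T h)) ⁻¹' (cpre T j C) ∩ cpre T m (SS T hLC m) := by
      ext y
      simp only [cpre, Set.mem_preimage, Set.mem_inter_iff, Subgroup.coe_inclusion]
    rw [h1]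
    exact IsCompact.inter_left (good_SS T hLC m).2.1
      (@IsClosed.preimage _ _ (T.τ m) (T.τ j) _ (incl_cont_le T h) _ hC)
  · have h1 : C ∩ SS T hLC m = C :=
      Set.inter_eq_self_of_subset_left (hCS.trans (SS_le T hLC h.le))
    rw [h1, cpre_eq_image T h.le C (hCS.trans (good_SS T hLC j).1)]
    have hcpt : @IsCompact _ (T.τ j) (cpre T j C) :=
      @IsCompact.of_isClosed_subset _ (T.τ j) _ _ (good_SS T hLC j).2.1 hC
        (cpre_mono T j hCS)
    exact @IsCompact.image _ _ (T.τ j) (T.τ m) _ _ hcpt (incl_cont_le T h.le)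

theorem compact_transfer (hT2 : ∀ n, @T2Space (T.H n) (T.τ n))
    (τind : TopologicalSpace G) (hind : T.IsIndTop τind) (j : ℕ) (C' : Set G)
    (h1 : C' ⊆ SS T hLC j) (h2 : @IsCompact _ τind C') :
    @IsCompact _ (T.τ j) (cpre T j C') := by
  classical
  set X := ↥(SS T hLC j) with hX
  let g : X → T.H j := fun x => ⟨x.1, (good_SS T hLC j).1 x.2⟩
  let t1 : TopologicalSpace X := (T.τ j).induced g
  let t2 : TopologicalSpace X := τind.induced Subtype.val
  -- every t2-open set is t1-open
  have ho21 : ∀ s : Set X, IsOpen[t2] s → IsOpen[t1] s := by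
    intro s hs
    obtain ⟨u, hu, rfl⟩ := hs
    exact ⟨cpre T j u, (hind u).mp hu j, rfl⟩
  -- every t1-closed set is t2-closed
  have hcl : ∀ s : Set X, IsClosed[t1] s → IsClosed[t2] s := by
    intro s hs
    obtain ⟨F0, hF0, hpre⟩ := (@isClosed_induced_iff X _ (T.τ j) s g).mp hs
    subst hpre
    set C : Set G := Subtype.val '' (g ⁻¹' F0) with hCdef
    have hCS : C ⊆ SS T hLC j := by
      rintro c ⟨x, _, rfl⟩
      exact x.2
    have hCpre : cpre T j C = F0 ∩ cpre T j (SS T hLC j) := by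
      ext y
      constructor
      · rintro ⟨x, hx, hxy⟩
        have hgx : g x = y := Subtype.ext hxy
        refine ⟨hgx ▸ hx, ?_⟩
        have hx2 := x.2
        rw [hxy] at hx2
        exact hx2
      · rintro ⟨hyF, hyS⟩
        refine ⟨⟨(y : G), hyS⟩, ?_, rfl⟩
        have : g ⟨(y : G), hyS⟩ = y := Subtype.ext rfl
        rw [Set.mem_preimage, this]
        exact hyF
    have hCcl : IsClosed[T.τ j] (cpre T j C) := by
      rw [hCpre]
      letI := T.τ j
      haveI := hT2 j
      exact hF0.inter (good_SS T hLC j).2.1.isClosed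
    have hopen := key T hLC hT2 τind hind C (closed_traces T hLC j C hCS hCcl)
    have hseteq : g ⁻¹' F0 = Subtype.val ⁻¹' (((⋃ n, SS T hLC n) \ C)ᶜ) := by
      ext x
      simp only [Set.mem_preimage, Set.mem_compl_iff, Set.mem_diff, not_and, not_not]
      constructor
      · intro hx _
        exact ⟨x, hx, rfl⟩
      · intro hx
        have hxC : (x : G) ∈ C :=
          hx (Set.mem_iUnion.mpr ⟨j, x.2⟩)
        obtain ⟨x', hx', hxx'⟩ := hxC
        have : x' = x := Subtype.ext hxx'
        rwa [← this]
    rw [hseteq]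
    exact @IsClosed.preimage _ _ t2 τind _ (@continuous_induced_dom _ _ _ τind)
      _ (@IsOpen.isClosed_compl _ τind _ hopen)
  -- hence every t1-open set is t2-open
  have ho12 : ∀ s : Set X, IsOpen[t1] s → IsOpen[t2] s := by
    intro s hs
    have : IsClosed[t1] sᶜ := @isClosed_compl_iff _ t1 s |>.mpr hs
    have := hcl _ this
    rw [@isClosed_compl_iff _ t2 s] at this
    exact this
  -- transfer compactness
  have hXc2 : @IsCompact X t2 (Subtype.val ⁻¹' C') := by
    letI := τind
    have : IsCompact (Subtype.val '' (Subtype.val ⁻¹' C' : Set X)) := by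
      rwa [Subtype.image_preimage_coe, Set.inter_eq_self_of_subset_right h1]
    exact Subtype.isCompact_iff.mpr this
  have hXc1 : @IsCompact X t1 (Subtype.val ⁻¹' C') := by
    have hcont : Continuous[t2, t1] (id : X → X) :=
      continuous_def.mpr fun s hs => ho12 s hs
    have := @IsCompact.image _ _ t2 t1 _ _ hXc2 hcont
    rwa [Set.image_id] at this
  have hgc : Continuous[t1, T.τ j] g := @continuous_induced_dom _ _ g (T.τ j)
  have himg : g '' (Subtype.val ⁻¹' C') = cpre T j C' := by
    ext y
    constructor
    · rintro ⟨x, hx, rfl⟩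
      exact hx
    · intro hy
      exact ⟨⟨(y : G), h1 hy⟩, hy, Subtype.ext rfl⟩
  have := @IsCompact.image _ _ t1 (T.τ j) _ _ hXc1 hgc
  rwa [himg] at this

theorem Kcpt (τind : TopologicalSpace G) (hind : T.IsIndTop τind) (n : ℕ) :
    @IsCompact ↥(Hsub T hLC) (τind.induced ((↑) : Hsub T hLC → G))
      (Subtype.val ⁻¹' (SS T hLC n)) := by
  letI := τind
  refine Subtype.isCompact_iff.mpr ?_
  rw [Set.image_preimage_eq_of_subset
    (fun x hx => ⟨⟨x, Set.mem_iUnion.mpr ⟨n, hx⟩⟩, rfl⟩)]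
  exact SS_cpt_ind T hLC τind hind n

end St12

open St12 in
/-- For a tower of Hausdorff locally compact groups, the group
`G = ⋃ₙ G_n` endowed with the inductive limit topology `τind` contains an open subgroup
which is a k_ω-space. -/
theorem statement_12 {G : Type*} [Group G] (T : GroupTower G)
    (hT2 : ∀ n, @T2Space (T.H n) (T.τ n))
    (hLC : ∀ n, @LocallyCompactSpace (T.H n) (T.τ n))
    (τind : TopologicalSpace G) (hind : T.IsIndTop τind) :
    ∃ H' : Subgroup G, IsOpen[τind] (H' : Set G) ∧
      @IsKOmegaSpace (↥H') (τind.induced ((↑) : H' → G)) := by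
  classical
  refine ⟨Hsub T hLC, ?_, ?_⟩
  · -- openness of the subgroup
    have htr : ∀ n, @IsCompact _ (T.τ n) (cpre T n ((∅ : Set G) ∩ SS T hLC n)) := by
      intro n
      have he : cpre T n ((∅ : Set G) ∩ SS T hLC n) = ∅ := by
        rw [Set.empty_inter]
        simp [cpre]
      rw [he]
      exact @isCompact_empty _ (T.τ n)
    have h := key T hLC hT2 τind hind ∅ htr
    rw [Set.diff_empty] at h
    exact h
  · unfold IsKOmegaSpace
    refine ⟨fun n => Subtype.val ⁻¹' (SS T hLC n), Kcpt T hLC τind hind, ?_, ?_, ?_⟩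
    · exact fun n => Set.preimage_mono (SS_succ T hLC n)
    · ext x
      simp only [Set.mem_iUnion, Set.mem_preimage, Set.mem_univ, iff_true]
      exact Set.mem_iUnion.mp (x.2 : (x : G) ∈ ⋃ n, SS T hLC n)
    · intro A
      constructor
      · intro hA n
        letI := τind
        exact hA.preimage continuous_subtype_val
      · intro hA
        letI := τind
        set A' : Set G := Subtype.val '' A with hA'
        have htr : ∀ j, @IsCompact _ (T.τ j) (cpre T j (A' ∩ SS T hLC j)) := by
          intro j
          refine compact_transfer T hLC hT2 τind hind j _ Set.inter_subset_right ?_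
          haveI : CompactSpace ↥(Subtype.val ⁻¹' (SS T hLC j) : Set ↥(Hsub T hLC)) :=
            isCompact_iff_compactSpace.mp (Kcpt T hLC τind hind j)
          have hcl := hA j
          have hcpt := hcl.isCompact
          have h1 := hcpt.image continuous_subtype_val
          rw [Subtype.image_preimage_coe, Set.inter_comm] at h1
          have h2 := h1.image continuous_subtype_val
          rwa [Set.image_inter_preimage] at h2
        have hopen := key T hLC hT2 τind hind A' htr
        have hseteq : A = Subtype.val ⁻¹' (((⋃ n, SS T hLC n) \ A')ᶜ) := by
          ext x
          simp only [Set.mem_preimage, Set.mem_compl_iff, Set.mem_diff, not_and, not_not]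
          constructor
          · intro hx _
            exact ⟨x, hx, rfl⟩
          · intro hx
            obtain ⟨x', hx', hxx'⟩ := hx (x.2 : (x : G) ∈ ⋃ n, SS T hLC n)
            have hx'' : x' = x := Subtype.ext hxx'
            rwa [← hx'']
        rw [hseteq]
        exact (hopen.isClosed_compl).preimage continuous_subtype_val
end
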